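/- arXiv:2206.09622 — 9 statements merged into one kernel-verified Lean document; each statement's English description precedes it below -/
import Mathlib

section
/- Let ξ : ℝ₊^q → ℝ₊^p be superadditive with ξ(0)=0, V a nonnegative p×q matrix, and M(z) = sup_{r≥1} ξ(r·zV)/r. Then for all z ∈ ℝ₊^p, M(z) = lim_{r→∞} ξ(⌊r·zV⌋)/r = sup_{r ≥ 1} ξ(⌊r·zV⌋)/r, where ⌊·⌋ denotes componentwise floor. In particular M does not depend on the choice of superadditive extension of ξ from ℕ^q to ℝ₊^q. -/
/-!
A superadditive `ξ` that is nonnegative on the cone is monotone there and satisfies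
`n • ξ x ≤ ξ (n • x)`. Since `⌊r w⌋ ≥ (r - s) w` for a constant `s` depending only on `w`,
for every `r₀` the point `⌊r w⌋` dominates `⌊(r - s) / r₀⌋` copies of `r₀ w`, so
`liminf_{r → ∞} ξ(⌊r w⌋) / r ≥ ξ(r₀ w) / r₀`. Together with `ξ(⌊r w⌋) ≤ ξ(r w)` this squeezes
`sup ξ(r w)/r ≥ sup ξ(⌊r w⌋)/r ≥ limsup ≥ liminf ≥ sup ξ(r w)/r`.
-/

open scoped ENNReal Topology
open Filter

theorem iSup_eq_iSup_and_tendsto_of_le_liminf {α β : Type*} [CompleteLinearOrder α]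
    [TopologicalSpace α] [OrderTopology α] [SemilatticeSup β] [Nonempty β] {a : β}
    {f g : β → α} (hgf : ∀ r, a ≤ r → g r ≤ f r) (hf : ∀ r, a ≤ r → f r ≤ liminf g atTop) :
    (⨆ r : {r // a ≤ r}, f r) = (⨆ r : {r // a ≤ r}, g r) ∧
      Tendsto g atTop (𝓝 (⨆ r : {r // a ≤ r}, f r)) := by
  have hsup_le_liminf : (⨆ r : {r // a ≤ r}, f r) ≤ liminf g atTop :=
    iSup_le fun r => hf r r.2
  have hlimsup_le : limsup g atTop ≤ ⨆ r : {r // a ≤ r}, g r :=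
    limsup_le_of_le (by isBoundedDefault) <| (eventually_ge_atTop a).mono fun r hr =>
      le_iSup (fun r : {r // a ≤ r} => g r) ⟨r, hr⟩
  have hsup_mono : (⨆ r : {r // a ≤ r}, g r) ≤ ⨆ r : {r // a ≤ r}, f r :=
    iSup_mono fun r => hgf r r.2
  have hliminf_le_limsup : liminf g atTop ≤ limsup g atTop := liminf_le_limsup
  refine ⟨le_antisymm (hsup_le_liminf.trans (hliminf_le_limsup.trans hlimsup_le)) hsup_mono, ?_⟩
  exact tendsto_of_liminf_eq_limsup
    (le_antisymm (hliminf_le_limsup.trans (hlimsup_le.trans hsup_mono)) hsup_le_liminf)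
    (le_antisymm (hlimsup_le.trans hsup_mono) (hsup_le_liminf.trans hliminf_le_limsup))

theorem ofReal_le_liminf_div_of_eventually_le {c t : ℝ} {g : ℝ → ℝ}
    (h : ∀ᶠ r in atTop, c * (r - t) ≤ g r) :
    ENNReal.ofReal c ≤ liminf (fun r => ENNReal.ofReal (g r / r)) atTop := by
  have hlim : Tendsto (fun r => c * (r - t) / r) atTop (𝓝 c) := by
    have : Tendsto (fun r => c - c * t / r) atTop (𝓝 (c - 0)) :=
      tendsto_const_nhds.sub (tendsto_const_nhds.div_atTop tendsto_id)
    rw [sub_zero] at this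
    refine this.congr' <| (eventually_ne_atTop 0).mono fun r hr => ?_
    field_simp
  rw [← ((ENNReal.continuous_ofReal.tendsto c).comp hlim).liminf_eq]
  refine liminf_le_liminf <| (h.and (eventually_gt_atTop 0)).mono fun r ⟨hr, hpos⟩ => ?_
  exact ENNReal.ofReal_le_ofReal (div_le_div_of_nonneg_right hr hpos.le)

section Superadditive

variable {E F : Type*} [AddCommMonoid F] [PartialOrder F] [IsOrderedAddMonoid F] {ξ : E → F}

theorem monotoneOn_of_superadditive [AddCommGroup E] [PartialOrder E] [IsOrderedAddMonoid E]
    (hnn : ∀ x, 0 ≤ x → 0 ≤ ξ x) (hsuper : ∀ x y, 0 ≤ x → 0 ≤ y → ξ x + ξ y ≤ ξ (x + y)) :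
    MonotoneOn ξ (Set.Ici 0) := by
  intro x hx y _ hxy
  have hyx : 0 ≤ y - x := sub_nonneg.2 hxy
  calc ξ x ≤ ξ x + ξ (y - x) := le_add_of_nonneg_right (hnn _ hyx)
    _ ≤ ξ (x + (y - x)) := hsuper _ _ hx hyx
    _ = ξ y := by rw [add_sub_cancel]

theorem nsmul_le_of_superadditive [AddCommMonoid E] [PartialOrder E] [IsOrderedAddMonoid E]
    (hnn : ∀ x, 0 ≤ x → 0 ≤ ξ x) (hsuper : ∀ x y, 0 ≤ x → 0 ≤ y → ξ x + ξ y ≤ ξ (x + y))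
    (n : ℕ) {x : E} (hx : 0 ≤ x) : n • ξ x ≤ ξ (n • x) := by
  induction n with
  | zero => simpa using hnn 0 le_rfl
  | succ n ih =>
    calc (n + 1) • ξ x = n • ξ x + ξ x := succ_nsmul _ _
      _ ≤ ξ (n • x) + ξ x := add_le_add_left ih _
      _ ≤ ξ (n • x + x) := hsuper _ _ (nsmul_nonneg hx n) hx
      _ = ξ ((n + 1) • x) := by rw [succ_nsmul]

end Superadditive

theorem exists_sub_smul_le_floor {ι : Type*} [Fintype ι] {w : ι → ℝ} (hw : 0 ≤ w) :
    ∃ s : ℝ, ∀ r : ℝ, (r - s) • w ≤ fun j => (⌊r * w j⌋ : ℝ) := by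
  -- `0⁻¹ = 0`, so only the positive coordinates contribute and `1 ≤ s * w j` whenever `0 < w j`.
  refine ⟨∑ j, (w j)⁻¹, fun r j => ?_⟩
  rcases (hw j).eq_or_lt with hwj | hwj
  · simp [← hwj]
  · have hinv : (w j)⁻¹ ≤ ∑ k, (w k)⁻¹ :=
      Finset.single_le_sum (fun k _ => inv_nonneg.2 (hw k)) (Finset.mem_univ j)
    have hone : 1 ≤ (∑ k, (w k)⁻¹) * w j := by
      simpa [inv_mul_cancel₀ hwj.ne'] using mul_le_mul_of_nonneg_right hinv hwj.le
    have hfloor_gt := Int.sub_one_lt_floor (r * w j)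
    simp only [Pi.smul_apply, smul_eq_mul]
    nlinarith

theorem eventually_smul_le_floor_of_superadditive {ι F : Type*} [Fintype ι] [AddCommGroup F]
    [PartialOrder F] [IsOrderedAddMonoid F] [Module ℝ F] [SMulPosMono ℝ F]
    {ξ : (ι → ℝ) → F} (hnn : ∀ x, 0 ≤ x → 0 ≤ ξ x)
    (hsuper : ∀ x y, 0 ≤ x → 0 ≤ y → ξ x + ξ y ≤ ξ (x + y))
    {w : ι → ℝ} (hw : 0 ≤ w) {r₀ : ℝ} (hr₀ : 0 < r₀) :
    ∃ t : ℝ, ∀ᶠ r in atTop, ((r - t) / r₀) • ξ (r₀ • w) ≤ ξ (fun j => (⌊r * w j⌋ : ℝ)) := by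
  obtain ⟨s, hs⟩ := exists_sub_smul_le_floor hw
  refine ⟨s + r₀, (eventually_ge_atTop s).mono fun r hr => ?_⟩
  set n := ⌊(r - s) / r₀⌋₊
  have hr₀w : 0 ≤ r₀ • w := smul_nonneg hr₀.le hw
  have hn_lower : (r - (s + r₀)) / r₀ ≤ n := by
    have hfloor_gt := Nat.lt_floor_add_one ((r - s) / r₀)
    rw [sub_add_eq_sub_sub, sub_div, div_self hr₀.ne']
    linarith
  have hn_upper : (n : ℝ) * r₀ ≤ r - s :=
    (le_div_iff₀ hr₀).1 (Nat.floor_le (div_nonneg (sub_nonneg.2 hr) hr₀.le))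
  have hcopies : n • (r₀ • w) ≤ fun j => (⌊r * w j⌋ : ℝ) := by
    rw [← Nat.cast_smul_eq_nsmul ℝ, smul_smul]
    exact (smul_le_smul_of_nonneg_right hn_upper hw).trans (hs r)
  calc ((r - (s + r₀)) / r₀) • ξ (r₀ • w) ≤ (n : ℝ) • ξ (r₀ • w) :=
        smul_le_smul_of_nonneg_right hn_lower (hnn _ hr₀w)
    _ = n • ξ (r₀ • w) := Nat.cast_smul_eq_nsmul ℝ _ _
    _ ≤ ξ (n • (r₀ • w)) := nsmul_le_of_superadditive hnn hsuper n hr₀w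
    _ ≤ ξ (fun j => (⌊r * w j⌋ : ℝ)) :=
        monotoneOn_of_superadditive hnn hsuper (nsmul_nonneg hr₀w n)
          ((nsmul_nonneg hr₀w n).trans hcopies) hcopies

theorem M_floor_characterization_general {p q : ℕ}
    (ξ : (Fin q → ℝ) → (Fin p → ℝ)) (V : Matrix (Fin p) (Fin q) ℝ)
    (hV : ∀ i j, 0 ≤ V i j)
    (hnn : ∀ x : Fin q → ℝ, 0 ≤ x → 0 ≤ ξ x)
    (hsuper : ∀ x y : Fin q → ℝ, 0 ≤ x → 0 ≤ y → ξ x + ξ y ≤ ξ (x + y))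
    (M : (Fin p → ℝ) → Fin p → ℝ≥0∞)
    (hM : ∀ z : Fin p → ℝ, ∀ i,
      M z i = ⨆ r : {r : ℝ // 1 ≤ r},
        ENNReal.ofReal (ξ ((r : ℝ) • Matrix.vecMul z V) i / (r : ℝ))) :
    ∀ z : Fin p → ℝ, 0 ≤ z → ∀ i,
      (M z i = ⨆ r : {r : ℝ // 1 ≤ r},
          ENNReal.ofReal (ξ (fun j => (⌊(r : ℝ) * Matrix.vecMul z V j⌋ : ℝ)) i / (r : ℝ)))
      ∧ Tendsto
          (fun r : ℝ =>
            ENNReal.ofReal (ξ (fun j => (⌊r * Matrix.vecMul z V j⌋ : ℝ)) i / r))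
          atTop (nhds (M z i)) := by
  intro z hz i
  rw [hM]
  set w := Matrix.vecMul z V
  have hw : 0 ≤ w := fun j =>
    (Finset.sum_nonneg fun k _ => mul_nonneg (hz k) (hV k j) : 0 ≤ ∑ k, z k * V k j)
  refine iSup_eq_iSup_and_tendsto_of_le_liminf
    (f := fun r : ℝ => ENNReal.ofReal (ξ (r • w) i / r))
    (g := fun r : ℝ => ENNReal.ofReal (ξ (fun j => (⌊r * w j⌋ : ℝ)) i / r))
    (fun r hr => ?_) (fun r₀ hr₀ => ?_)
  · have hpos : (0 : ℝ) < r := one_pos.trans_le hr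
    refine ENNReal.ofReal_le_ofReal (div_le_div_of_nonneg_right ?_ hpos.le)
    have hfloor_nonneg : 0 ≤ fun j => (⌊r * w j⌋ : ℝ) := fun j =>
      Int.cast_nonneg (Int.floor_nonneg.2 (mul_nonneg hpos.le (hw j)))
    have hfloor_le : (fun j => (⌊r * w j⌋ : ℝ)) ≤ r • w := fun j => Int.floor_le (r * w j)
    exact monotoneOn_of_superadditive hnn hsuper hfloor_nonneg
      (hfloor_nonneg.trans hfloor_le) hfloor_le i
  · have hpos : (0 : ℝ) < r₀ := one_pos.trans_le hr₀
    obtain ⟨t, ht⟩ := eventually_smul_le_floor_of_superadditive hnn hsuper hw hpos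
    refine ofReal_le_liminf_div_of_eventually_le (t := t) (ht.mono fun r hr => ?_)
    have hri := hr i
    simp only [Pi.smul_apply, smul_eq_mul] at hri
    exact (le_of_eq (by ring)).trans hri

/-- For superadditive `ξ` with `ξ 0 = 0` and nonnegative `V`, the function
`M(z) = sup_{r≥1} ξ(r·zV)/r` also equals `sup_{r≥1} ξ(⌊r·zV⌋)/r` and is the limit
as `r → ∞` of `ξ(⌊r·zV⌋)/r`, where `⌊·⌋` is the componentwise floor. In particular
`M` only depends on the values of `ξ` at integer points. -/
theorem M_floor_characterization {p q : ℕ}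
    (ξ : (Fin q → ℝ) → (Fin p → ℝ)) (V : Matrix (Fin p) (Fin q) ℝ)
    (hV : ∀ i j, 0 ≤ V i j)
    (hnn : ∀ x : Fin q → ℝ, 0 ≤ x → 0 ≤ ξ x)
    (hsuper : ∀ x y : Fin q → ℝ, 0 ≤ x → 0 ≤ y → ξ x + ξ y ≤ ξ (x + y))
    (h0 : ξ 0 = 0)
    (M : (Fin p → ℝ) → Fin p → ℝ≥0∞)
    (hM : ∀ z : Fin p → ℝ, ∀ i,
      M z i = ⨆ r : {r : ℝ // 1 ≤ r},
        ENNReal.ofReal (ξ ((r : ℝ) • Matrix.vecMul z V) i / (r : ℝ))) :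
    ∀ z : Fin p → ℝ, 0 ≤ z → ∀ i,
      (M z i = ⨆ r : {r : ℝ // 1 ≤ r},
          ENNReal.ofReal (ξ (fun j => (⌊(r : ℝ) * Matrix.vecMul z V j⌋ : ℝ)) i / (r : ℝ)))
      ∧ Tendsto
          (fun r : ℝ =>
            ENNReal.ofReal (ξ (fun j => (⌊r * Matrix.vecMul z V j⌋ : ℝ)) i / r))
          atTop (nhds (M z i)) :=
  M_floor_characterization_general ξ V hV hnn hsuper M hM
end

section
/- Let M : ℝ₊^p → ℝ₊^p be concave, primitive and positively homogeneous with unique eigenpair (λ*, z*), λ* > 0, z* ∈ S*. Then for every x ∈ ℝ₊^p \ {0}: lim_{k→∞} M^k(x)/|M^k(x)|₁ = z*, and lim_{k→∞} |M^{k+1}(x)|₁/|M^k(x)|₁ = λ* = lim_{k→∞} |M^k(x)|₁^{1/k}. -/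
open Filter

lemma aux_root_one {c : ℝ} (hc : 0 < c) :
    Tendsto (fun k : ℕ => c ^ ((k : ℝ)⁻¹)) atTop (nhds 1) := by
  have h1 : Tendsto (fun k : ℕ => Real.log c * (k : ℝ)⁻¹) atTop (nhds 0) := by
    have := (tendsto_inv_atTop_zero (𝕜 := ℝ)).comp tendsto_natCast_atTop_atTop (α := ℕ)
    simpa using this.const_mul (Real.log c)
  have h2 := (Real.continuous_exp.tendsto 0).comp h1
  simp only [Real.exp_zero, Function.comp_def] at h2
  refine h2.congr (fun k => ?_)
  rw [Real.rpow_def_of_pos hc]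

lemma aux_to_zero (d : ℕ → ℝ) (N : ℕ) (hN : 0 < N) (q : ℝ) (hq0 : 0 ≤ q) (hq1 : q < 1)
    (hd0 : ∀ k, 0 ≤ d k) (hanti : Antitone d) (hstep : ∀ k, d (k + N) ≤ q * d k) :
    Tendsto d atTop (nhds 0) := by
  have hsub : ∀ n, d (n * N) ≤ q ^ n * d 0 := by
    intro n
    induction n with
    | zero => simp
    | succ n ih =>
        have h : d ((n + 1) * N) ≤ q * d (n * N) := by
          have := hstep (n * N); simpa [add_mul, one_mul] using this
        calc d ((n+1)*N) ≤ q * d (n*N) := h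
          _ ≤ q * (q ^ n * d 0) := by nlinarith [hd0 (n*N)]
          _ = q ^ (n+1) * d 0 := by ring
  have hdiv : Tendsto (fun k : ℕ => k / N) atTop atTop := by
    apply tendsto_atTop_atTop.2
    intro b
    exact ⟨b * N, fun k hk => (Nat.le_div_iff_mul_le hN).2 hk⟩
  have hgeo : Tendsto (fun n : ℕ => q ^ n * d 0) atTop (nhds 0) := by
    simpa using (tendsto_pow_atTop_nhds_zero_of_lt_one hq0 hq1).mul_const (d 0)
  have hcomp := hgeo.comp hdiv
  refine tendsto_of_tendsto_of_tendsto_of_le_of_le' tendsto_const_nhds hcomp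
    (Eventually.of_forall fun k => hd0 k) (Eventually.of_forall fun k => ?_)
  calc d k ≤ d (k / N * N) := hanti (Nat.div_mul_le_self k N)
    _ ≤ q ^ (k / N) * d 0 := hsub _

lemma aux_ratio (s t lj lj1 lam : ℝ) (hs : s ≠ 0) (hlj : lj ≠ 0)
    (hlj1 : lj1 = lam * lj) (hlam : lam ≠ 0) : lam * (t / lj1 / (s / lj)) = t / s := by
  subst hlj1
  field_simp

set_option maxHeartbeats 2000000 in
/-- For a concave, primitive, positively homogeneous `M : ℝ₊^p → ℝ₊^p` with unique
eigenpair `(λ*, z*)`, for every `x ∈ ℝ₊^p \ {0}` the normalized iterates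
`M^k(x)/|M^k(x)|₁` converge to `z*`, the ratios `|M^{k+1}(x)|₁/|M^k(x)|₁` converge
to `λ*`, and `|M^k(x)|₁^{1/k} → λ*`. -/
theorem krause_iterates_limits {p : ℕ} [NeZero p]
    (M : (Fin p → ℝ) → (Fin p → ℝ))
    (hnn : ∀ x : Fin p → ℝ, 0 ≤ x → 0 ≤ M x)
    (hconc : ∀ (α : ℝ), 0 ≤ α → α ≤ 1 → ∀ x y : Fin p → ℝ, 0 ≤ x → 0 ≤ y →
      α • M x + (1 - α) • M y ≤ M (α • x + (1 - α) • y))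
    (hhom : ∀ (α : ℝ), 0 < α → ∀ x : Fin p → ℝ, 0 ≤ x → M (α • x) = α • M x)
    (hprim : ∃ n₀ : ℕ, ∀ n ≥ n₀, ∀ x : Fin p → ℝ, 0 ≤ x → x ≠ 0 →
      ∀ i, 0 < (M^[n] x) i)
    (lam : ℝ) (zs : Fin p → ℝ) (hlam : 0 < lam)
    (hzs : (∀ j, 0 < zs j) ∧ ∑ j, zs j = 1) (heig : M zs = lam • zs) :
    ∀ x : Fin p → ℝ, 0 ≤ x → x ≠ 0 →
      Tendsto (fun k : ℕ => (∑ i, (M^[k] x) i)⁻¹ • M^[k] x) atTop (nhds zs) ∧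
      Tendsto (fun k : ℕ => (∑ i, (M^[k+1] x) i) / (∑ i, (M^[k] x) i)) atTop
        (nhds lam) ∧
      Tendsto (fun k : ℕ => (∑ i, (M^[k] x) i) ^ ((k : ℝ)⁻¹)) atTop (nhds lam) := by
  intro x hx hx0
  obtain ⟨n₀, hn₀⟩ := hprim
  obtain ⟨hzpos, hzsum⟩ := hzs
  haveI : Nonempty (Fin p) := ⟨⟨0, Nat.pos_of_ne_zero (NeZero.ne p)⟩⟩
  set N := n₀ + 1 with hNdef
  have hNpos : 0 < N := Nat.succ_pos _
  have hzs0 : (0:Fin p → ℝ) ≤ zs := fun j => (hzpos j).le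
  -- basic structural facts
  have hsuper : ∀ x y : Fin p → ℝ, 0 ≤ x → 0 ≤ y → M x + M y ≤ M (x + y) := by
    intro x y hx hy
    have hz : (0:Fin p → ℝ) ≤ (1/2 : ℝ) • x + (1/2 : ℝ) • y := by positivity
    have h1 := hconc (1/2) (by norm_num) (by norm_num) x y hx hy
    norm_num at h1
    have he : (2:ℝ) • ((1/2 : ℝ) • x + (1/2 : ℝ) • y) = x + y := by module
    have h2 : M (x + y) = (2:ℝ) • M ((1/2 : ℝ) • x + (1/2 : ℝ) • y) := by
      rw [← hhom 2 (by norm_num) _ hz, he]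
    rw [h2]
    calc M x + M y = (2:ℝ) • ((1/2:ℝ) • M x + (1/2:ℝ) • M y) := by module
      _ ≤ (2:ℝ) • M ((1/2 : ℝ) • x + (1/2 : ℝ) • y) :=
          smul_le_smul_of_nonneg_left h1 (by norm_num)
  have hmono : ∀ x y : Fin p → ℝ, 0 ≤ x → x ≤ y → M x ≤ M y := by
    intro x y hx hxy
    have h1 : 0 ≤ y - x := by simpa [sub_nonneg] using hxy
    have h2 := hsuper x (y - x) hx h1
    have h3 : x + (y - x) = y := by ring
    rw [h3] at h2
    have h4 := hnn (y - x) h1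
    calc M x = M x + 0 := by ring
      _ ≤ M x + M (y - x) := by gcongr
      _ ≤ M y := h2
  have hiter_nn : ∀ (k:ℕ) (y : Fin p → ℝ), 0 ≤ y → 0 ≤ M^[k] y := by
    intro k
    induction k with
    | zero => simp
    | succ k ih =>
        intro y hy
        rw [Function.iterate_succ_apply']
        exact hnn _ (ih y hy)
  have hiter_mono : ∀ (k:ℕ) (y z : Fin p → ℝ), 0 ≤ y → y ≤ z → M^[k] y ≤ M^[k] z := by
    intro k
    induction k with
    | zero => intro y z _ h; simpa using h
    | succ k ih =>
        intro y z hy hyz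
        rw [Function.iterate_succ_apply', Function.iterate_succ_apply']
        exact hmono _ _ (hiter_nn k y hy) (ih y z hy hyz)
  have hiter_hom : ∀ (k:ℕ) (α:ℝ), 0 < α → ∀ y : Fin p → ℝ, 0 ≤ y →
      M^[k] (α • y) = α • M^[k] y := by
    intro k
    induction k with
    | zero => intro α _ y _; simp
    | succ k ih =>
        intro α hα y hy
        rw [Function.iterate_succ_apply', Function.iterate_succ_apply', ih α hα y hy,
          hhom α hα _ (hiter_nn k y hy)]
  have hiter_super : ∀ (k:ℕ) (y z : Fin p → ℝ), 0 ≤ y → 0 ≤ z →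
      M^[k] y + M^[k] z ≤ M^[k] (y + z) := by
    intro k
    induction k with
    | zero => intro y z _ _; simp
    | succ k ih =>
        intro y z hy hz
        rw [Function.iterate_succ_apply', Function.iterate_succ_apply',
          Function.iterate_succ_apply']
        calc M (M^[k] y) + M (M^[k] z) ≤ M (M^[k] y + M^[k] z) :=
              hsuper _ _ (hiter_nn k y hy) (hiter_nn k z hz)
          _ ≤ M (M^[k] (y + z)) :=
              hmono _ _ (add_nonneg (hiter_nn k y hy) (hiter_nn k z hz)) (ih y z hy hz)
  have hiter_eig : ∀ k : ℕ, M^[k] zs = (lam ^ k) • zs := by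
    intro k
    induction k with
    | zero => simp
    | succ k ih =>
        rw [Function.iterate_succ_apply', ih, hhom _ (pow_pos hlam k) _ hzs0, heig,
          pow_succ]
        ext i; simp [Pi.smul_apply]; ring
  -- positivity of images of basis vectors
  have hsingle_nn : ∀ i : Fin p, (0: Fin p → ℝ) ≤ Pi.single i 1 :=
    fun i => Pi.single_nonneg.2 zero_le_one
  have hsingle_ne : ∀ i : Fin p, (Pi.single i 1 : Fin p → ℝ) ≠ 0 := by
    intro i h
    have := congrFun h i
    simp at this
  have hepos : ∀ i j, 0 < (M^[N] ((Pi.single i (1:ℝ) : Fin p → ℝ))) j :=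
    fun i j => hn₀ N (Nat.le_succ _) _ (hsingle_nn i) (hsingle_ne i) j
  -- the contraction constant
  set c : ℝ := Finset.univ.inf' Finset.univ_nonempty
      (fun q : Fin p × Fin p => zs q.1 * (M^[N] (Pi.single q.1 (1:ℝ))) q.2 / zs q.2)
      with hcdef
  have hcpos : 0 < c := by
    rw [hcdef, Finset.lt_inf'_iff]
    intro q _
    exact div_pos (mul_pos (hzpos q.1) (hepos q.1 q.2)) (hzpos q.2)
  have hc_le : ∀ i j, c * zs j ≤ zs i * (M^[N] ((Pi.single i (1:ℝ) : Fin p → ℝ))) j := by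
    intro i j
    have h := Finset.inf'_le
      (fun q : Fin p × Fin p => zs q.1 * (M^[N] (Pi.single q.1 (1:ℝ))) q.2 / zs q.2)
      (Finset.mem_univ (i, j))
    rw [← hcdef] at h
    exact (le_div_iff₀ (hzpos j)).1 h
  -- the sequence of iterates starting from y₀ := M^[N] x
  set y₀ : Fin p → ℝ := M^[N] x with hy0def
  have hy0nn : (0:Fin p → ℝ) ≤ y₀ := hiter_nn N x hx
  have hfk : ∀ k, M^[k] y₀ = M^[k+N] x :=
    fun k => (Function.iterate_add_apply M k N x).symm
  have hfnn : ∀ k, (0:Fin p → ℝ) ≤ M^[k] y₀ := fun k => hiter_nn k y₀ hy0nn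
  have hfpos : ∀ k i, 0 < (M^[k] y₀) i := by
    intro k i
    rw [hfk]
    exact hn₀ (k+N) (le_trans (Nat.le_succ _) (Nat.le_add_left N k)) x hx hx0 i
  have hsplit : ∀ k, M^[k+N] y₀ = M^[N] (M^[k] y₀) := by
    intro k
    rw [add_comm, Function.iterate_add_apply]
  -- min and max ratios
  set A : ℕ → ℝ := fun k => Finset.univ.inf' Finset.univ_nonempty
      (fun i => (M^[k] y₀) i / zs i) with hAdef
  set B : ℕ → ℝ := fun k => Finset.univ.sup' Finset.univ_nonempty
      (fun i => (M^[k] y₀) i / zs i) with hBdef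
  have hAle : ∀ k i, A k * zs i ≤ (M^[k] y₀) i := by
    intro k i
    have h : A k ≤ (M^[k] y₀) i / zs i :=
      Finset.inf'_le (fun i => (M^[k] y₀) i / zs i) (Finset.mem_univ i)
    exact (le_div_iff₀ (hzpos i)).1 h
  have hBge : ∀ k i, (M^[k] y₀) i ≤ B k * zs i := by
    intro k i
    have h : (M^[k] y₀) i / zs i ≤ B k :=
      Finset.le_sup' (fun i => (M^[k] y₀) i / zs i) (Finset.mem_univ i)
    exact (div_le_iff₀ (hzpos i)).1 h
  have hApos : ∀ k, 0 < A k := by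
    intro k
    rw [show A k = Finset.univ.inf' Finset.univ_nonempty
      (fun i => (M^[k] y₀) i / zs i) from rfl, Finset.lt_inf'_iff]
    intro i _
    exact div_pos (hfpos k i) (hzpos i)
  have hA_ge : ∀ (k:ℕ) (γ:ℝ), (∀ i, γ * zs i ≤ (M^[k] y₀) i) → γ ≤ A k := by
    intro k γ h
    exact Finset.le_inf' _ _ (fun i _ => (le_div_iff₀ (hzpos i)).2 (h i))
  have hB_le : ∀ (k:ℕ) (γ:ℝ), (∀ i, (M^[k] y₀) i ≤ γ * zs i) → B k ≤ γ := by
    intro k γ h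
    exact Finset.sup'_le _ _ (fun i _ => (div_le_iff₀ (hzpos i)).2 (h i))
  have hAB : ∀ k, A k ≤ B k := by
    intro k
    obtain ⟨i⟩ := (inferInstance : Nonempty (Fin p))
    have h1 := hAle k i
    have h2 := hBge k i
    have := hzpos i
    nlinarith
  have hABle : ∀ k, A k • zs ≤ M^[k] y₀ := by
    intro k i
    simpa [Pi.smul_apply] using hAle k i
  have hBube : ∀ k, M^[k] y₀ ≤ B k • zs := by
    intro k i
    simpa [Pi.smul_apply] using hBge k i
  -- one-step monotonicity of the ratio bounds
  have hstep1A : ∀ k, lam * A k ≤ A (k+1) := by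
    intro k
    apply hA_ge
    intro i
    have h2 : M^[1] (A k • zs) ≤ M^[1] (M^[k] y₀) :=
      hiter_mono 1 _ _ (smul_nonneg (hApos k).le hzs0) (hABle k)
    rw [hiter_hom 1 (A k) (hApos k) zs hzs0] at h2
    have h3 : M^[1] zs = lam • zs := by simpa using heig
    rw [h3] at h2
    have h4 := h2 i
    simp only [Pi.smul_apply, smul_eq_mul] at h4
    have h5 : M^[k+1] y₀ = M^[1] (M^[k] y₀) := by
      rw [add_comm, Function.iterate_add_apply]
    rw [h5]
    calc lam * A k * zs i = A k * (lam * zs i) := by ring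
      _ ≤ M^[1] (M^[k] y₀) i := h4
  have hstep1B : ∀ k, B (k+1) ≤ lam * B k := by
    intro k
    apply hB_le
    intro i
    have hBpos : 0 < B k := lt_of_lt_of_le (hApos k) (hAB k)
    have h2 : M^[1] (M^[k] y₀) ≤ M^[1] (B k • zs) :=
      hiter_mono 1 _ _ (hfnn k) (hBube k)
    rw [hiter_hom 1 (B k) hBpos zs hzs0] at h2
    have h3 : M^[1] zs = lam • zs := by simpa using heig
    rw [h3] at h2
    have h4 := h2 i
    simp only [Pi.smul_apply, smul_eq_mul] at h4
    have h5 : M^[k+1] y₀ = M^[1] (M^[k] y₀) := by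
      rw [add_comm, Function.iterate_add_apply]
    rw [h5]
    calc M^[1] (M^[k] y₀) i ≤ B k * (lam * zs i) := h4
      _ = lam * B k * zs i := by ring
  -- N-step contraction
  have hstepNA : ∀ k, lam ^ N * A k + (B k - A k) * c ≤ A (k + N) := by
    intro k
    rcases eq_or_lt_of_le (hAB k) with heqAB | hltAB
    · apply hA_ge
      intro i
      rw [hsplit k]
      have h2 : M^[N] (A k • zs) ≤ M^[N] (M^[k] y₀) :=
        hiter_mono N _ _ (smul_nonneg (hApos k).le hzs0) (hABle k)
      rw [hiter_hom N (A k) (hApos k) zs hzs0, hiter_eig N] at h2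
      have h4 := h2 i
      simp only [Pi.smul_apply, smul_eq_mul] at h4
      rw [← heqAB]
      calc (lam ^ N * A k + (A k - A k) * c) * zs i = A k * (lam ^ N * zs i) := by ring
        _ ≤ M^[N] (M^[k] y₀) i := h4
    · apply hA_ge
      intro j
      rw [hsplit k]
      obtain ⟨i, -, hi⟩ := Finset.exists_mem_eq_sup' Finset.univ_nonempty
        (fun i => (M^[k] y₀) i / zs i)
      have hyi : B k * zs i = (M^[k] y₀) i := by
        have h : B k = (M^[k] y₀) i / zs i := hi
        rw [h, div_mul_cancel₀ _ (ne_of_gt (hzpos i))]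
      have hcoefpos : 0 < (B k - A k) * zs i := mul_pos (by linarith) (hzpos i)
      have hdecomp : A k • zs + ((B k - A k) * zs i) • (Pi.single i (1:ℝ) : Fin p → ℝ) ≤ M^[k] y₀ := by
        intro l
        by_cases hli : l = i
        · subst hli
          simp only [Pi.add_apply, Pi.smul_apply, smul_eq_mul, Pi.single_eq_same, ← hyi]
          ring_nf
          nlinarith [hzpos l]
        · simp only [Pi.add_apply, Pi.smul_apply, smul_eq_mul,
            Pi.single_eq_of_ne hli, mul_zero, add_zero]
          exact hAle k l
      have h1 : M^[N] (A k • zs) + M^[N] (((B k - A k) * zs i) • (Pi.single i (1:ℝ) : Fin p → ℝ))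
          ≤ M^[N] (M^[k] y₀) := by
        refine le_trans (hiter_super N _ _ (smul_nonneg (hApos k).le hzs0)
          (smul_nonneg hcoefpos.le (hsingle_nn i))) ?_
        exact hiter_mono N _ _ (add_nonneg (smul_nonneg (hApos k).le hzs0)
          (smul_nonneg hcoefpos.le (hsingle_nn i))) hdecomp
      rw [hiter_hom N (A k) (hApos k) zs hzs0, hiter_eig N,
        hiter_hom N _ hcoefpos _ (hsingle_nn i)] at h1
      have h4 := h1 j
      simp only [Pi.add_apply, Pi.smul_apply, smul_eq_mul] at h4
      have h5 := hc_le i j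
      nlinarith [hepos i j, hzpos i, hzpos j]
  have hstepNB : ∀ k, B (k + N) ≤ lam ^ N * B k - (B k - A k) * c := by
    intro k
    have hBpos : 0 < B k := lt_of_lt_of_le (hApos k) (hAB k)
    rcases eq_or_lt_of_le (hAB k) with heqAB | hltAB
    · apply hB_le
      intro i
      rw [hsplit k]
      have h2 : M^[N] (M^[k] y₀) ≤ M^[N] (B k • zs) :=
        hiter_mono N _ _ (hfnn k) (hBube k)
      rw [hiter_hom N (B k) hBpos zs hzs0, hiter_eig N] at h2
      have h4 := h2 i
      simp only [Pi.smul_apply, smul_eq_mul] at h4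
      have hz0 : B k - A k = 0 := by rw [heqAB]; ring
      calc M^[N] (M^[k] y₀) i ≤ B k * (lam ^ N * zs i) := h4
        _ = (lam ^ N * B k - (B k - A k) * c) * zs i := by rw [hz0]; ring
    · apply hB_le
      intro l
      rw [hsplit k]
      obtain ⟨j, -, hj⟩ := Finset.exists_mem_eq_inf' Finset.univ_nonempty
        (fun i => (M^[k] y₀) i / zs i)
      have hyj : A k * zs j = (M^[k] y₀) j := by
        have h : A k = (M^[k] y₀) j / zs j := hj
        rw [h, div_mul_cancel₀ _ (ne_of_gt (hzpos j))]
      have hcoefpos : 0 < (B k - A k) * zs j := mul_pos (by linarith) (hzpos j)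
      have hdecomp : M^[k] y₀ + ((B k - A k) * zs j) • (Pi.single j (1:ℝ) : Fin p → ℝ) ≤ B k • zs := by
        intro l'
        by_cases hlj : l' = j
        · subst hlj
          simp only [Pi.add_apply, Pi.smul_apply, smul_eq_mul, Pi.single_eq_same, ← hyj]
          ring_nf
          nlinarith [hzpos l']
        · simp only [Pi.add_apply, Pi.smul_apply, smul_eq_mul,
            Pi.single_eq_of_ne hlj, mul_zero, add_zero]
          exact hBge k l'
      have h1 : M^[N] (M^[k] y₀) + M^[N] (((B k - A k) * zs j) • (Pi.single j (1:ℝ) : Fin p → ℝ))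
          ≤ M^[N] (B k • zs) := by
        refine le_trans (hiter_super N _ _ (hfnn k)
          (smul_nonneg hcoefpos.le (hsingle_nn j))) ?_
        exact hiter_mono N _ _ (add_nonneg (hfnn k)
          (smul_nonneg hcoefpos.le (hsingle_nn j))) hdecomp
      rw [hiter_hom N (B k) hBpos zs hzs0, hiter_eig N,
        hiter_hom N _ hcoefpos _ (hsingle_nn j)] at h1
      have h4 := h1 l
      simp only [Pi.add_apply, Pi.smul_apply, smul_eq_mul] at h4
      have h5 := hc_le j l
      nlinarith [hepos j l, hzpos j, hzpos l]
  -- normalized sequences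
  have hlampow : ∀ k : ℕ, (0:ℝ) < lam ^ k := fun k => pow_pos hlam k
  set u : ℕ → ℝ := fun k => A k / lam ^ k with hudef
  set v : ℕ → ℝ := fun k => B k / lam ^ k with hvdef
  have hupos : ∀ k, 0 < u k := fun k => div_pos (hApos k) (hlampow k)
  have humono : Monotone u := by
    apply monotone_nat_of_le_succ
    intro k
    rw [div_le_div_iff₀ (hlampow k) (hlampow (k+1))]
    have h := hstep1A k
    have hp := hlampow k
    rw [pow_succ]
    nlinarith
  have hvanti : Antitone v := by
    apply antitone_nat_of_succ_le
    intro k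
    rw [div_le_div_iff₀ (hlampow (k+1)) (hlampow k)]
    have h := hstep1B k
    have hp := hlampow k
    rw [pow_succ]
    nlinarith
  have huv : ∀ k, u k ≤ v k := fun k =>
    div_le_div_of_nonneg_right (hAB k) (hlampow k).le
  have hu_lb : ∀ k, u 0 ≤ u k := fun k => humono (Nat.zero_le k)
  have hv_ub : ∀ k, v k ≤ v 0 := fun k => hvanti (Nat.zero_le k)
  have hu_ub : ∀ k, u k ≤ v 0 := fun k => (huv k).trans (hv_ub k)
  have hv_lb : ∀ k, u 0 ≤ v k := fun k => (hu_lb k).trans (huv k)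
  set c' : ℝ := c / lam ^ N with hc'def
  have hc'pos : 0 < c' := div_pos hcpos (hlampow N)
  set d : ℕ → ℝ := fun k => v k - u k with hddef
  have hd0 : ∀ k, 0 ≤ d k := fun k => sub_nonneg.2 (huv k)
  have hdanti : Antitone d := fun k l h => sub_le_sub (hvanti h) (humono h)
  have hstepu : ∀ k, u k + c' * d k ≤ u (k + N) := by
    intro k
    have h := hstepNA k
    have key : (u k + c' * d k) * (lam ^ k * lam ^ N) = lam ^ N * A k + (B k - A k) * c := by
      simp only [hddef, hudef, hvdef, hc'def]
      field_simp
    have e1 : u (k + N) = A (k + N) / (lam ^ k * lam ^ N) := by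
      simp only [hudef, pow_add]
    rw [e1, le_div_iff₀ (mul_pos (hlampow k) (hlampow N)), key]
    exact h
  have hstepv : ∀ k, v (k + N) ≤ v k - c' * d k := by
    intro k
    have h := hstepNB k
    have key : (v k - c' * d k) * (lam ^ k * lam ^ N) = lam ^ N * B k - (B k - A k) * c := by
      simp only [hddef, hudef, hvdef, hc'def]
      field_simp
    have e1 : v (k + N) = B (k + N) / (lam ^ k * lam ^ N) := by
      simp only [hvdef, pow_add]
    rw [e1, div_le_iff₀ (mul_pos (hlampow k) (hlampow N)), key]
    exact h
  set q : ℝ := max (1 - 2 * c') 0 with hqdef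
  have hq0 : 0 ≤ q := le_max_right _ _
  have hq1 : q < 1 := max_lt (by linarith) one_pos
  have hstepd : ∀ k, d (k + N) ≤ q * d k := by
    intro k
    have h1 := hstepu k
    have h2 := hstepv k
    have h3 : d (k + N) ≤ (1 - 2 * c') * d k := by
      simp only [hddef] at h1 h2 ⊢
      nlinarith
    calc d (k + N) ≤ (1 - 2 * c') * d k := h3
      _ ≤ q * d k := mul_le_mul_of_nonneg_right (le_max_left _ _) (hd0 k)
  have hdlim : Tendsto d atTop (nhds 0) := aux_to_zero d N hNpos q hq0 hq1 hd0 hdanti hstepd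
  -- limits of u and v
  have hubdd : BddAbove (Set.range u) := ⟨v 0, by rintro _ ⟨k, rfl⟩; exact hu_ub k⟩
  have hulim : Tendsto u atTop (nhds (⨆ k, u k)) := tendsto_atTop_ciSup humono hubdd
  set a : ℝ := ⨆ k, u k with hadef
  have hapos : 0 < a := lt_of_lt_of_le (hupos 0) (le_ciSup hubdd 0)
  have hvlim : Tendsto v atTop (nhds a) := by
    have h := hulim.add hdlim
    rw [add_zero] at h
    exact h.congr (fun k => by simp only [hddef]; ring)
  -- coordinatewise limits
  have hcoord : ∀ i, Tendsto (fun k => (M^[k] y₀) i / lam ^ k) atTop (nhds (a * zs i)) := by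
    intro i
    have hlow : Tendsto (fun k => u k * zs i) atTop (nhds (a * zs i)) :=
      hulim.mul_const (zs i)
    have hhigh : Tendsto (fun k => v k * zs i) atTop (nhds (a * zs i)) :=
      hvlim.mul_const (zs i)
    refine tendsto_of_tendsto_of_tendsto_of_le_of_le' hlow hhigh
      (Eventually.of_forall fun k => ?_) (Eventually.of_forall fun k => ?_)
    · rw [le_div_iff₀ (hlampow k)]
      have hx1 : u k * zs i * lam ^ k = A k * zs i := by
        simp only [hudef]
        field_simp
      rw [hx1]
      exact hAle k i
    · rw [div_le_iff₀ (hlampow k)]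
      have hx1 : v k * zs i * lam ^ k = B k * zs i := by
        simp only [hvdef]
        field_simp
      rw [hx1]
      exact hBge k i
  have hlow_pt : ∀ (k:ℕ) (i : Fin p), u k * zs i ≤ (M^[k] y₀) i / lam ^ k := by
    intro k i
    rw [le_div_iff₀ (hlampow k)]
    have hx1 : u k * zs i * lam ^ k = A k * zs i := by
      simp only [hudef]
      field_simp
    rw [hx1]
    exact hAle k i
  have hhigh_pt : ∀ (k:ℕ) (i : Fin p), (M^[k] y₀) i / lam ^ k ≤ v k * zs i := by
    intro k i
    rw [div_le_iff₀ (hlampow k)]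
    have hx1 : v k * zs i * lam ^ k = B k * zs i := by
      simp only [hvdef]
      field_simp
    rw [hx1]
    exact hBge k i
  -- sums
  set σ : ℕ → ℝ := fun k => ∑ i, (M^[k] y₀) i with hσdef
  have hσpos : ∀ k, 0 < σ k :=
    fun k => Finset.sum_pos (fun i _ => hfpos k i) Finset.univ_nonempty
  have hσlim : Tendsto (fun k => σ k / lam ^ k) atTop (nhds a) := by
    have h := tendsto_finset_sum Finset.univ (fun (i : Fin p) (_ : i ∈ Finset.univ) => hcoord i)
    have h2 : (∑ i, a * zs i) = a := by rw [← Finset.mul_sum, hzsum, mul_one]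
    rw [h2] at h
    refine h.congr (fun k => ?_)
    simp only [hσdef]
    rw [Finset.sum_div]
  have hσlb : ∀ k, u 0 ≤ σ k / lam ^ k := by
    intro k
    calc u 0 ≤ u k := hu_lb k
      _ = ∑ i, u k * zs i := by rw [← Finset.mul_sum, hzsum, mul_one]
      _ ≤ ∑ i, (M^[k] y₀) i / lam ^ k := Finset.sum_le_sum (fun i _ => hlow_pt k i)
      _ = σ k / lam ^ k := by simp only [hσdef]; rw [Finset.sum_div]
  have hσub : ∀ k, σ k / lam ^ k ≤ v 0 := by
    intro k
    calc σ k / lam ^ k = ∑ i, (M^[k] y₀) i / lam ^ k := by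
          simp only [hσdef]; rw [Finset.sum_div]
      _ ≤ ∑ i, v k * zs i := Finset.sum_le_sum (fun i _ => hhigh_pt k i)
      _ = v k := by rw [← Finset.mul_sum, hzsum, mul_one]
      _ ≤ v 0 := hv_ub k
  have hsubT : Tendsto (fun k : ℕ => k - N) atTop atTop := tendsto_sub_atTop_nat N
  have hkey : ∀ k, N ≤ k → M^[k - N] y₀ = M^[k] x := by
    intro k hk
    rw [hfk, Nat.sub_add_cancel hk]
  have hSeq : ∀ k, N ≤ k → (∑ i, (M^[k] x) i) = σ (k - N) := by
    intro k hk
    simp only [hσdef]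
    rw [hkey k hk]
  refine ⟨?_, ?_, ?_⟩
  · -- normalized iterates converge to zs
    have hG : Tendsto (fun k => (σ k)⁻¹ • (M^[k] y₀)) atTop (nhds zs) := by
      rw [tendsto_pi_nhds]
      intro i
      have h := (hcoord i).div hσlim (ne_of_gt hapos)
      have h2 : a * zs i / a = zs i :=
        mul_div_cancel_left₀ _ (ne_of_gt hapos)
      rw [h2] at h
      refine h.congr (fun k => ?_)
      simp only [Pi.div_apply, Pi.smul_apply, smul_eq_mul]
      rw [div_div_div_cancel_right₀ (ne_of_gt (hlampow k)), div_eq_inv_mul]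
    refine Tendsto.congr' ?_ (hG.comp hsubT)
    filter_upwards [eventually_ge_atTop N] with k hk
    simp only [Function.comp_apply, hσdef]
    rw [hkey k hk]
  · -- ratios converge to lam
    have hr : Tendsto (fun j => σ (j+1) / σ j) atTop (nhds lam) := by
      have h2 : Tendsto (fun j => σ (j+1) / lam ^ (j+1)) atTop (nhds a) :=
        hσlim.comp (tendsto_add_atTop_nat 1)
      have h3 := (h2.div hσlim (ne_of_gt hapos)).const_mul lam
      have h4 : lam * (a / a) = lam := by field_simp
      rw [h4] at h3
      refine h3.congr (fun j => ?_)
      simp only [Pi.div_apply]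
      exact aux_ratio (σ j) (σ (j+1)) (lam ^ j) (lam ^ (j+1)) lam
        (ne_of_gt (hσpos j)) (ne_of_gt (hlampow j)) (by rw [pow_succ]; ring)
        (ne_of_gt hlam)
    refine Tendsto.congr' ?_ (hr.comp hsubT)
    filter_upwards [eventually_ge_atTop N] with k hk
    simp only [Function.comp_apply, hσdef]
    have e2 : M^[k - N + 1] y₀ = M^[k+1] x := by
      rw [hfk, show (k - N + 1) + N = k + 1 by omega]
    rw [e2, hkey k hk]
  · -- k-th roots converge to lam
    have hu0v0 : (0:ℝ) < v 0 := lt_of_lt_of_le (hupos 0) (huv 0)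
    have hm' : (0:ℝ) < u 0 / lam ^ N := div_pos (hupos 0) (hlampow N)
    have hB' : (0:ℝ) < v 0 / lam ^ N := div_pos hu0v0 (hlampow N)
    have hWlim : Tendsto (fun k : ℕ => ((∑ i, (M^[k] x) i) / lam ^ k) ^ ((k:ℝ)⁻¹))
        atTop (nhds 1) := by
      refine tendsto_of_tendsto_of_tendsto_of_le_of_le' (aux_root_one hm')
        (aux_root_one hB') ?_ ?_
      · filter_upwards [eventually_ge_atTop N] with k hk
        apply Real.rpow_le_rpow hm'.le ?_ (inv_nonneg.2 (Nat.cast_nonneg k))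
        rw [hSeq k hk]
        have e : σ (k-N) / lam ^ k = (σ (k-N) / lam ^ (k-N)) / lam ^ N := by
          rw [div_div, ← pow_add, Nat.sub_add_cancel hk]
        rw [e]
        exact div_le_div_of_nonneg_right (hσlb (k-N)) (hlampow N).le
      · filter_upwards [eventually_ge_atTop N] with k hk
        have hbase : (0:ℝ) ≤ (∑ i, (M^[k] x) i) / lam ^ k := by
          rw [hSeq k hk]
          exact (div_pos (hσpos _) (hlampow k)).le
        apply Real.rpow_le_rpow hbase ?_ (inv_nonneg.2 (Nat.cast_nonneg k))
        rw [hSeq k hk]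
        have e : σ (k-N) / lam ^ k = (σ (k-N) / lam ^ (k-N)) / lam ^ N := by
          rw [div_div, ← pow_add, Nat.sub_add_cancel hk]
        rw [e]
        exact div_le_div_of_nonneg_right (hσub (k-N)) (hlampow N).le
    have hmain : Tendsto (fun k : ℕ => lam * (((∑ i, (M^[k] x) i) / lam ^ k) ^ ((k:ℝ)⁻¹)))
        atTop (nhds lam) := by
      have h := hWlim.const_mul lam
      rw [mul_one] at h
      exact h
    refine Tendsto.congr' ?_ hmain
    filter_upwards [eventually_ge_atTop (max N 1)] with k hk
    have hkN : N ≤ k := le_trans (le_max_left _ _) hk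
    have hk1 : 1 ≤ k := le_trans (le_max_right _ _) hk
    have hSp : 0 < ∑ i, (M^[k] x) i := by
      rw [hSeq k hkN]
      exact hσpos _
    have hkne : ((k:ℝ)) ≠ 0 := Nat.cast_ne_zero.2 (by omega)
    have hpow_root : ((lam ^ k : ℝ)) ^ ((k:ℝ)⁻¹) = lam := by
      rw [← Real.rpow_natCast lam k, ← Real.rpow_mul hlam.le,
        mul_inv_cancel₀ hkne, Real.rpow_one]
    have e1 : (∑ i, (M^[k] x) i) = lam ^ k * ((∑ i, (M^[k] x) i) / lam ^ k) := by
      field_simp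
    calc lam * (((∑ i, (M^[k] x) i) / lam ^ k) ^ ((k:ℝ)⁻¹))
        = (lam ^ k) ^ ((k:ℝ)⁻¹) * (((∑ i, (M^[k] x) i) / lam ^ k) ^ ((k:ℝ)⁻¹)) := by
          rw [hpow_root]
      _ = (lam ^ k * ((∑ i, (M^[k] x) i) / lam ^ k)) ^ ((k:ℝ)⁻¹) :=
          (Real.mul_rpow (hlampow k).le (div_nonneg hSp.le (hlampow k).le)).symm
      _ = (∑ i, (M^[k] x) i) ^ ((k:ℝ)⁻¹) := by rw [← e1]
end

section
/- Let M : ℝ₊^p → ℝ₊^p be concave, primitive, positively homogeneous with eigenpair (λ*, z*). Then the limit L(x) = lim_{k→∞} M^k(x)/(λ*)^k exists for all x ∈ ℝ₊^p, and L(x) = P(x)·z* where P : ℝ₊^p → ℝ₊ is concave, positively homogeneous, and P(x) > 0 for all x ≠ 0. -/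
/-!
Write `v k = λ⁻ᵏ • Mᵏ x` and squeeze it between multiples of `z`, `lo k • z ≤ v k ≤ hi k • z`,
with the best constants `lo k = minᵢ v k i / z i` and `hi k = maxᵢ v k i / z i`. Since `M` is
monotone and `M z = λ • z`, `lo` is nondecreasing and `hi` nonincreasing. Superadditivity of the
concave homogeneous map `Mⁿ`, together with the bound `Mⁿ y ≥ c yⱼ • z` coming from primitivity,
shrinks the gap `hi - lo` by a fixed factor `1 - κ < 1` every `n` steps. Hence `lo` and `hi` have a
common limit `P x`, and `v k → P x • z`. Concavity and homogeneity of `P` are inherited in the limit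
from the maps `λ⁻ᵏ • Mᵏ`.
-/

open Filter

structure IsConcavePosHom {ι : Type*} (M : (ι → ℝ) → ι → ℝ) : Prop where
  nonneg : ∀ x, 0 ≤ x → 0 ≤ M x
  concave : ∀ α : ℝ, 0 ≤ α → α ≤ 1 → ∀ x y, 0 ≤ x → 0 ≤ y →
    α • M x + (1 - α) • M y ≤ M (α • x + (1 - α) • y)
  map_smul : ∀ α : ℝ, 0 < α → ∀ x, 0 ≤ x → M (α • x) = α • M x

namespace IsConcavePosHom

variable {ι : Type*} {M N : (ι → ℝ) → ι → ℝ} {x y z : ι → ℝ}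

theorem map_zero (hM : IsConcavePosHom M) : M 0 = 0 := by
  have h := hM.map_smul 2 two_pos 0 le_rfl
  rw [smul_zero, two_smul] at h
  simpa using h

theorem map_smul_of_nonneg (hM : IsConcavePosHom M) {t : ℝ} (ht : 0 ≤ t) (hx : 0 ≤ x) :
    M (t • x) = t • M x := by
  rcases ht.eq_or_lt with rfl | ht
  · simp [hM.map_zero]
  · exact hM.map_smul t ht x hx

theorem add_le_map_add (hM : IsConcavePosHom M) (hx : 0 ≤ x) (hy : 0 ≤ y) :
    M x + M y ≤ M (x + y) := by
  have h := hM.concave (1 / 2) (by norm_num) (by norm_num) x y hx hy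
  rw [show (1 / 2 : ℝ) • x + (1 - 1 / 2 : ℝ) • y = (1 / 2 : ℝ) • (x + y) by module,
    hM.map_smul _ (by norm_num) _ (add_nonneg hx hy)] at h
  have h2 := smul_le_smul_of_nonneg_left h (zero_le_two (α := ℝ))
  rwa [show (2 : ℝ) • ((1 / 2 : ℝ) • M x + (1 - 1 / 2 : ℝ) • M y) = M x + M y by module,
    smul_smul, show (2 : ℝ) * (1 / 2) = 1 by norm_num, one_smul] at h2

theorem map_le_map (hM : IsConcavePosHom M) (hx : 0 ≤ x) (hxy : x ≤ y) : M x ≤ M y := by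
  have hyx : 0 ≤ y - x := sub_nonneg.mpr hxy
  calc M x ≤ M x + M (y - x) := le_add_of_nonneg_right (hM.nonneg _ hyx)
    _ ≤ M (x + (y - x)) := hM.add_le_map_add hx hyx
    _ = M y := by rw [add_sub_cancel]

protected theorem id : IsConcavePosHom (id : (ι → ℝ) → ι → ℝ) :=
  ⟨fun _ hx => hx, fun _ _ _ _ _ _ _ => le_rfl, fun _ _ _ _ => rfl⟩

theorem comp (hM : IsConcavePosHom M) (hN : IsConcavePosHom N) : IsConcavePosHom (M ∘ N) where
  nonneg x hx := hM.nonneg _ (hN.nonneg x hx)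
  concave α h0 h1 x y hx hy :=
    (hM.concave α h0 h1 _ _ (hN.nonneg x hx) (hN.nonneg y hy)).trans <|
      hM.map_le_map (add_nonneg (smul_nonneg h0 (hN.nonneg x hx))
        (smul_nonneg (sub_nonneg.mpr h1) (hN.nonneg y hy))) (hN.concave α h0 h1 x y hx hy)
  map_smul α hα x hx := by
    simp only [Function.comp_apply, hN.map_smul α hα x hx, hM.map_smul α hα _ (hN.nonneg x hx)]

theorem iterate (hM : IsConcavePosHom M) (k : ℕ) : IsConcavePosHom M^[k] := by
  induction k with
  | zero => exact IsConcavePosHom.id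
  | succ k ih => rw [Function.iterate_succ']; exact hM.comp ih

theorem const_smul (hM : IsConcavePosHom M) {c : ℝ} (hc : 0 < c) :
    IsConcavePosHom fun x => c • M x where
  nonneg x hx := smul_nonneg hc.le (hM.nonneg x hx)
  concave α h0 h1 x y hx hy := by
    rw [smul_comm α, smul_comm (1 - α), ← smul_add]
    exact smul_le_smul_of_nonneg_left (hM.concave α h0 h1 x y hx hy) hc.le
  map_smul α hα x hx := by rw [hM.map_smul α hα x hx, smul_comm]

theorem of_tendsto {F : ℕ → (ι → ℝ) → ι → ℝ} {G : (ι → ℝ) → ι → ℝ}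
    (hF : ∀ k, IsConcavePosHom (F k))
    (hFG : ∀ x, 0 ≤ x → Tendsto (fun k => F k x) atTop (nhds (G x))) : IsConcavePosHom G where
  nonneg x hx := ge_of_tendsto' (hFG x hx) fun k => (hF k).nonneg x hx
  concave α h0 h1 x y hx hy :=
    le_of_tendsto_of_tendsto' (((hFG x hx).const_smul α).add ((hFG y hy).const_smul (1 - α)))
      (hFG _ (add_nonneg (smul_nonneg h0 hx) (smul_nonneg (sub_nonneg.mpr h1) hy)))
      fun k => (hF k).concave α h0 h1 x y hx hy
  map_smul α hα x hx := by
    refine tendsto_nhds_unique (hFG _ (smul_nonneg hα.le hx)) ?_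
    simpa only [(hF _).map_smul α hα x hx] using (hFG x hx).const_smul α

theorem iterate_eigen (hM : IsConcavePosHom M) {μ : ℝ} (hμ : 0 ≤ μ) (hz : 0 ≤ z)
    (heig : M z = μ • z) (k : ℕ) : M^[k] z = μ ^ k • z := by
  induction k with
  | zero => simp
  | succ k ih =>
    rw [Function.iterate_succ_apply', ih, hM.map_smul_of_nonneg (pow_nonneg hμ k) hz, heig,
      smul_smul, pow_succ]

theorem coeff_of_smul_const {P : (ι → ℝ) → ℝ} {i : ι} (hz : 0 < z i)
    (hP : IsConcavePosHom fun x => P x • z) :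
    (∀ x, 0 ≤ x → 0 ≤ P x) ∧
      (∀ α : ℝ, 0 ≤ α → α ≤ 1 → ∀ x y, 0 ≤ x → 0 ≤ y →
        α * P x + (1 - α) * P y ≤ P (α • x + (1 - α) • y)) ∧
      (∀ α : ℝ, 0 < α → ∀ x, 0 ≤ x → P (α • x) = α * P x) := by
  refine ⟨fun x hx => ?_, fun α h0 h1 x y hx hy => ?_, fun α hα x hx => ?_⟩
  · exact nonneg_of_mul_nonneg_left (hP.nonneg x hx i) hz
  · have h := hP.concave α h0 h1 x y hx hy i
    simp only [Pi.add_apply, Pi.smul_apply, smul_eq_mul] at h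
    exact le_of_mul_le_mul_right (by linarith) hz
  · have h := congrFun (hP.map_smul α hα x hx) i
    simp only [Pi.smul_apply, smul_eq_mul] at h
    exact mul_right_cancel₀ hz.ne' (by rw [h, mul_assoc])

end IsConcavePosHom

section Ratio

variable {ι : Type*} [Fintype ι] [Nonempty ι] {z w : ι → ℝ} {t : ℝ}

noncomputable def lowerRatio (z w : ι → ℝ) : ℝ :=
  Finset.univ.inf' Finset.univ_nonempty fun i => w i / z i

noncomputable def upperRatio (z w : ι → ℝ) : ℝ :=
  Finset.univ.sup' Finset.univ_nonempty fun i => w i / z i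

theorem le_lowerRatio_iff (hz : ∀ i, 0 < z i) : t ≤ lowerRatio z w ↔ t • z ≤ w := by
  simp only [lowerRatio, Finset.le_inf'_iff, Finset.mem_univ, true_implies, Pi.le_def,
    Pi.smul_apply, smul_eq_mul, le_div_iff₀ (hz _)]

theorem upperRatio_le_iff (hz : ∀ i, 0 < z i) : upperRatio z w ≤ t ↔ w ≤ t • z := by
  simp only [upperRatio, Finset.sup'_le_iff, Finset.mem_univ, true_implies, Pi.le_def,
    Pi.smul_apply, smul_eq_mul, div_le_iff₀ (hz _)]

theorem lowerRatio_smul_le (hz : ∀ i, 0 < z i) : lowerRatio z w • z ≤ w :=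
  (le_lowerRatio_iff hz).mp le_rfl

theorem le_upperRatio_smul (hz : ∀ i, 0 < z i) : w ≤ upperRatio z w • z :=
  (upperRatio_le_iff hz).mp le_rfl

theorem lowerRatio_nonneg (hz : ∀ i, 0 < z i) (hw : 0 ≤ w) : 0 ≤ lowerRatio z w :=
  (le_lowerRatio_iff hz).mpr (by rwa [zero_smul])

theorem lowerRatio_pos (hz : ∀ i, 0 < z i) (hw : ∀ i, 0 < w i) : 0 < lowerRatio z w :=
  (Finset.lt_inf'_iff _).mpr fun i _ => div_pos (hw i) (hz i)

theorem lowerRatio_le_upperRatio : lowerRatio z w ≤ upperRatio z w :=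
  let i := Classical.arbitrary ι
  (Finset.inf'_le _ (Finset.mem_univ i)).trans
    (Finset.le_sup' (fun i => w i / z i) (Finset.mem_univ i))

end Ratio

namespace IsConcavePosHom

variable {ι : Type*} [Fintype ι] [Nonempty ι] [DecidableEq ι] {N : (ι → ℝ) → ι → ℝ}
  {y w z : ι → ℝ} {μ : ℝ}

theorem lowerRatio_mul_smul_le (hN : IsConcavePosHom N) (hz : ∀ i, 0 < z i) (j : ι)
    (hy : 0 ≤ y) : (lowerRatio z (N (Pi.single j 1)) * y j) • z ≤ N y := by
  have he : (0 : ι → ℝ) ≤ Pi.single j 1 := by simp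
  have hsingle : y j • (Pi.single j 1 : ι → ℝ) ≤ y := by
    intro i
    rcases eq_or_ne i j with rfl | hij
    · simp
    · simpa [Pi.single_apply, hij] using hy i
  calc (lowerRatio z (N (Pi.single j 1)) * y j) • z
      = y j • lowerRatio z (N (Pi.single j 1)) • z := by rw [mul_comm, smul_smul]
    _ ≤ y j • N (Pi.single j 1) := smul_le_smul_of_nonneg_left (lowerRatio_smul_le hz) (hy j)
    _ = N (y j • Pi.single j 1) := (hN.map_smul_of_nonneg (hy j) he).symm
    _ ≤ N y := hN.map_le_map (smul_nonneg (hy j) he) hsingle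

theorem lowerRatio_add_le (hN : IsConcavePosHom N) (hz : ∀ i, 0 < z i) (hμ : 0 < μ)
    (heig : N z = μ • z) (j : ι) (hw : 0 ≤ w) :
    lowerRatio z w + μ⁻¹ * lowerRatio z (N (Pi.single j 1)) * (w j - lowerRatio z w * z j) ≤
      lowerRatio z (μ⁻¹ • N w) := by
  set a := lowerRatio z w
  set c := lowerRatio z (N (Pi.single j 1))
  have hd : 0 ≤ w - a • z := sub_nonneg.mpr (lowerRatio_smul_le hz)
  have hlow : (a * μ) • z + (c * (w j - a * z j)) • z ≤ N w := by
    calc (a * μ) • z + (c * (w j - a * z j)) • z ≤ N (a • z) + N (w - a • z) := by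
          rw [hN.map_smul_of_nonneg (lowerRatio_nonneg hz hw) (fun i => (hz i).le), heig,
            smul_smul]
          gcongr
          exact hN.lowerRatio_mul_smul_le hz j hd
      _ ≤ N (a • z + (w - a • z)) :=
          hN.add_le_map_add (smul_nonneg (lowerRatio_nonneg hz hw) fun i => (hz i).le) hd
      _ = N w := by rw [add_sub_cancel]
  refine (le_lowerRatio_iff hz).mpr ?_
  calc (a + μ⁻¹ * c * (w j - a * z j)) • z
      = μ⁻¹ • ((a * μ) • z + (c * (w j - a * z j)) • z) := by
        rw [smul_add, smul_smul, smul_smul, ← add_smul]; congr 1; field_simp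
    _ ≤ μ⁻¹ • N w := smul_le_smul_of_nonneg_left hlow (inv_nonneg.mpr hμ.le)

theorem upperRatio_le_sub (hN : IsConcavePosHom N) (hz : ∀ i, 0 < z i) (hμ : 0 < μ)
    (heig : N z = μ • z) (j : ι) (hw : 0 ≤ w) :
    upperRatio z (μ⁻¹ • N w) ≤
      upperRatio z w - μ⁻¹ * lowerRatio z (N (Pi.single j 1)) * (upperRatio z w * z j - w j) := by
  set b := upperRatio z w
  set c := lowerRatio z (N (Pi.single j 1))
  have hb : 0 ≤ b := (lowerRatio_nonneg hz hw).trans lowerRatio_le_upperRatio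
  have hd : 0 ≤ b • z - w := sub_nonneg.mpr (le_upperRatio_smul hz)
  have hup : N w + (c * (b * z j - w j)) • z ≤ (b * μ) • z := by
    calc N w + (c * (b * z j - w j)) • z ≤ N w + N (b • z - w) := by
          gcongr
          exact hN.lowerRatio_mul_smul_le hz j hd
      _ ≤ N (w + (b • z - w)) := hN.add_le_map_add hw hd
      _ = N (b • z) := by rw [add_sub_cancel]
      _ = (b * μ) • z := by
          rw [hN.map_smul_of_nonneg hb (fun i => (hz i).le), heig, smul_smul]
  refine (upperRatio_le_iff hz).mpr ?_
  calc μ⁻¹ • N w ≤ μ⁻¹ • ((b * μ) • z - (c * (b * z j - w j)) • z) :=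
        smul_le_smul_of_nonneg_left (le_sub_iff_add_le.mpr hup) (inv_nonneg.mpr hμ.le)
    _ = (b - μ⁻¹ * c * (b * z j - w j)) • z := by
        rw [← sub_smul, smul_smul]; congr 1; field_simp

end IsConcavePosHom

section Orbit

variable {ι : Type*} {M : (ι → ℝ) → ι → ℝ} {lam : ℝ} {x z : ι → ℝ}

noncomputable def rescaledOrbit (M : (ι → ℝ) → ι → ℝ) (lam : ℝ) (x : ι → ℝ) (k : ℕ) : ι → ℝ :=
  (lam ^ k)⁻¹ • M^[k] x

theorem rescaledOrbit_nonneg (hM : IsConcavePosHom M) (hlam : 0 < lam) (hx : 0 ≤ x) (k : ℕ) :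
    0 ≤ rescaledOrbit M lam x k :=
  smul_nonneg (by positivity) ((hM.iterate k).nonneg x hx)

theorem rescaledOrbit_add (hM : IsConcavePosHom M) (hlam : 0 < lam) (hx : 0 ≤ x) (k n : ℕ) :
    rescaledOrbit M lam x (k + n) = (lam ^ n)⁻¹ • M^[n] (rescaledOrbit M lam x k) := by
  rw [rescaledOrbit, rescaledOrbit, (hM.iterate n).map_smul _ (by positivity) _
    ((hM.iterate k).nonneg x hx), smul_smul, ← Function.iterate_add_apply, pow_add, mul_inv,
    add_comm n k, mul_comm]

variable [Fintype ι] [Nonempty ι]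

theorem monotone_lowerRatio_rescaledOrbit (hM : IsConcavePosHom M) (hlam : 0 < lam)
    (hz : ∀ i, 0 < z i) (heig : M z = lam • z) (hx : 0 ≤ x) :
    Monotone fun k => lowerRatio z (rescaledOrbit M lam x k) := by
  classical
  refine monotone_nat_of_le_succ fun k => ?_
  have hw := rescaledOrbit_nonneg hM hlam hx k
  set w := rescaledOrbit M lam x k
  let j := Classical.arbitrary ι
  have hgain : 0 ≤ lam⁻¹ * lowerRatio z (M (Pi.single j 1)) * (w j - lowerRatio z w * z j) :=
    mul_nonneg (mul_nonneg (inv_nonneg.mpr hlam.le)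
      (lowerRatio_nonneg hz (hM.nonneg _ (by simp))))
      (sub_nonneg.mpr (lowerRatio_smul_le hz j))
  calc lowerRatio z w ≤ _ := le_add_of_nonneg_right hgain
    _ ≤ lowerRatio z (lam⁻¹ • M w) := hM.lowerRatio_add_le hz hlam heig j hw
    _ = lowerRatio z (rescaledOrbit M lam x (k + 1)) := by
        rw [rescaledOrbit_add hM hlam hx k 1, pow_one, Function.iterate_one]

theorem antitone_upperRatio_rescaledOrbit (hM : IsConcavePosHom M) (hlam : 0 < lam)
    (hz : ∀ i, 0 < z i) (heig : M z = lam • z) (hx : 0 ≤ x) :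
    Antitone fun k => upperRatio z (rescaledOrbit M lam x k) := by
  classical
  refine antitone_nat_of_succ_le fun k => ?_
  have hw := rescaledOrbit_nonneg hM hlam hx k
  set w := rescaledOrbit M lam x k
  let j := Classical.arbitrary ι
  have hgain : 0 ≤ lam⁻¹ * lowerRatio z (M (Pi.single j 1)) * (upperRatio z w * z j - w j) :=
    mul_nonneg (mul_nonneg (inv_nonneg.mpr hlam.le)
      (lowerRatio_nonneg hz (hM.nonneg _ (by simp))))
      (sub_nonneg.mpr (le_upperRatio_smul hz j))
  calc upperRatio z (rescaledOrbit M lam x (k + 1)) = upperRatio z (lam⁻¹ • M w) := by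
        rw [rescaledOrbit_add hM hlam hx k 1, pow_one, Function.iterate_one]
    _ ≤ _ := hM.upperRatio_le_sub hz hlam heig j hw
    _ ≤ upperRatio z w := sub_le_self _ hgain

end Orbit

section Limit

variable {ι : Type*} [Fintype ι] [Nonempty ι] {M : (ι → ℝ) → ι → ℝ} {lam : ℝ} {x z : ι → ℝ}

noncomputable def limitFunctional (M : (ι → ℝ) → ι → ℝ) (lam : ℝ) (z x : ι → ℝ) : ℝ :=
  ⨆ k, lowerRatio z (rescaledOrbit M lam x k)

theorem tendsto_lowerRatio_rescaledOrbit (hM : IsConcavePosHom M) (hlam : 0 < lam)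
    (hz : ∀ i, 0 < z i) (heig : M z = lam • z) (hx : 0 ≤ x) :
    Tendsto (fun k => lowerRatio z (rescaledOrbit M lam x k)) atTop
      (nhds (limitFunctional M lam z x)) :=
  tendsto_atTop_ciSup (monotone_lowerRatio_rescaledOrbit hM hlam hz heig hx)
    ⟨upperRatio z (rescaledOrbit M lam x 0), by
      rintro _ ⟨k, rfl⟩
      exact lowerRatio_le_upperRatio.trans
        (antitone_upperRatio_rescaledOrbit hM hlam hz heig hx (Nat.zero_le k))⟩

theorem upperRatio_sub_lowerRatio_rescaledOrbit_add_le [DecidableEq ι] (hM : IsConcavePosHom M)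
    (hlam : 0 < lam) (hz : ∀ i, 0 < z i) (heig : M z = lam • z) (hx : 0 ≤ x) (n : ℕ) (j : ι)
    (k : ℕ) :
    upperRatio z (rescaledOrbit M lam x (k + n)) - lowerRatio z (rescaledOrbit M lam x (k + n)) ≤
      (1 - (lam ^ n)⁻¹ * lowerRatio z (M^[n] (Pi.single j 1)) * z j) *
        (upperRatio z (rescaledOrbit M lam x k) - lowerRatio z (rescaledOrbit M lam x k)) := by
  have hw := rescaledOrbit_nonneg hM hlam hx k
  have heig' := hM.iterate_eigen hlam.le (fun i => (hz i).le) heig n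
  rw [rescaledOrbit_add hM hlam hx k n]
  have hlow := (hM.iterate n).lowerRatio_add_le hz (pow_pos hlam n) heig' j hw
  have hup := (hM.iterate n).upperRatio_le_sub hz (pow_pos hlam n) heig' j hw
  linarith

theorem tendsto_upperRatio_rescaledOrbit (hM : IsConcavePosHom M) (hlam : 0 < lam)
    (hz : ∀ i, 0 < z i) (heig : M z = lam • z) {n : ℕ}
    (hprim : ∀ y, 0 ≤ y → y ≠ 0 → ∀ i, 0 < M^[n] y i) (hx : 0 ≤ x) :
    Tendsto (fun k => upperRatio z (rescaledOrbit M lam x k)) atTop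
      (nhds (limitFunctional M lam z x)) := by
  classical
  set hi := fun k => upperRatio z (rescaledOrbit M lam x k)
  have hlo : Tendsto (fun k => lowerRatio z (rescaledOrbit M lam x k)) atTop (nhds (limitFunctional M lam z x)) :=
    tendsto_lowerRatio_rescaledOrbit hM hlam hz heig hx
  have hhi : Tendsto hi atTop (nhds (⨅ k, hi k)) :=
    tendsto_atTop_ciInf (antitone_upperRatio_rescaledOrbit hM hlam hz heig hx) ⟨0, by
      rintro _ ⟨k, rfl⟩
      exact (lowerRatio_nonneg hz (rescaledOrbit_nonneg hM hlam hx k)).trans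
        lowerRatio_le_upperRatio⟩
  have hle : limitFunctional M lam z x ≤ ⨅ k, hi k :=
    le_of_tendsto_of_tendsto' hlo hhi fun _ => lowerRatio_le_upperRatio
  let j := Classical.arbitrary ι
  set κ := (lam ^ n)⁻¹ * lowerRatio z (M^[n] (Pi.single j 1)) * z j
  have hκ : 0 < κ := mul_pos (mul_pos (by positivity)
    (lowerRatio_pos hz (hprim _ (by simp) (by simp [Pi.single_eq_zero_iff])))) (hz j)
  have hgap : (⨅ k, hi k) - limitFunctional M lam z x ≤
      (1 - κ) * ((⨅ k, hi k) - limitFunctional M lam z x) :=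
    le_of_tendsto_of_tendsto'
      ((hhi.comp (tendsto_add_atTop_nat n)).sub (hlo.comp (tendsto_add_atTop_nat n)))
      ((hhi.sub hlo).const_mul _)
      (upperRatio_sub_lowerRatio_rescaledOrbit_add_le hM hlam hz heig hx n j)
  have heq : (⨅ k, hi k) = limitFunctional M lam z x := by nlinarith
  rwa [heq] at hhi

theorem tendsto_rescaledOrbit (hM : IsConcavePosHom M) (hlam : 0 < lam)
    (hz : ∀ i, 0 < z i) (heig : M z = lam • z) {n : ℕ}
    (hprim : ∀ y, 0 ≤ y → y ≠ 0 → ∀ i, 0 < M^[n] y i) (hx : 0 ≤ x) :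
    Tendsto (rescaledOrbit M lam x) atTop (nhds (limitFunctional M lam z x • z)) := by
  refine tendsto_pi_nhds.mpr fun i => ?_
  exact tendsto_of_tendsto_of_tendsto_of_le_of_le
    ((tendsto_lowerRatio_rescaledOrbit hM hlam hz heig hx).mul_const (z i))
    ((tendsto_upperRatio_rescaledOrbit hM hlam hz heig hprim hx).mul_const (z i))
    (fun _ => lowerRatio_smul_le hz i) (fun _ => le_upperRatio_smul hz i)

theorem limitFunctional_pos (hM : IsConcavePosHom M) (hlam : 0 < lam)
    (hz : ∀ i, 0 < z i) (heig : M z = lam • z) {n : ℕ}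
    (hprim : ∀ y, 0 ≤ y → y ≠ 0 → ∀ i, 0 < M^[n] y i) (hx : 0 ≤ x) (hx0 : x ≠ 0) :
    0 < limitFunctional M lam z x :=
  (lowerRatio_pos hz fun i => mul_pos (by positivity) (hprim x hx hx0 i)).trans_le <|
    (monotone_lowerRatio_rescaledOrbit hM hlam hz heig hx).ge_of_tendsto
      (tendsto_lowerRatio_rescaledOrbit hM hlam hz heig hx) n

end Limit

/-- For a concave, primitive, positively homogeneous `M : ℝ₊^p → ℝ₊^p` with eigenpair
`(λ*, z*)`, the limit `L(x) = lim_k M^k(x)/(λ*)^k` exists for all `x ∈ ℝ₊^p` and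
equals `P(x)·z*` for a concave, positively homogeneous `P : ℝ₊^p → ℝ₊` which is
positive on nonzero vectors. -/
theorem krause_limit_functional {p : ℕ} [NeZero p]
    (M : (Fin p → ℝ) → (Fin p → ℝ))
    (hnn : ∀ x : Fin p → ℝ, 0 ≤ x → 0 ≤ M x)
    (hconc : ∀ (α : ℝ), 0 ≤ α → α ≤ 1 → ∀ x y : Fin p → ℝ, 0 ≤ x → 0 ≤ y →
      α • M x + (1 - α) • M y ≤ M (α • x + (1 - α) • y))
    (hhom : ∀ (α : ℝ), 0 < α → ∀ x : Fin p → ℝ, 0 ≤ x → M (α • x) = α • M x)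
    (hprim : ∃ n₀ : ℕ, ∀ n ≥ n₀, ∀ x : Fin p → ℝ, 0 ≤ x → x ≠ 0 →
      ∀ i, 0 < (M^[n] x) i)
    (lam : ℝ) (zs : Fin p → ℝ) (hlam : 0 < lam)
    (hzs : (∀ j, 0 < zs j) ∧ ∑ j, zs j = 1) (heig : M zs = lam • zs) :
    ∃ P : (Fin p → ℝ) → ℝ,
      (∀ x : Fin p → ℝ, 0 ≤ x → 0 ≤ P x) ∧
      (∀ (α : ℝ), 0 ≤ α → α ≤ 1 → ∀ x y : Fin p → ℝ, 0 ≤ x → 0 ≤ y →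
        α * P x + (1 - α) * P y ≤ P (α • x + (1 - α) • y)) ∧
      (∀ (α : ℝ), 0 < α → ∀ x : Fin p → ℝ, 0 ≤ x → P (α • x) = α * P x) ∧
      (∀ x : Fin p → ℝ, 0 ≤ x → x ≠ 0 → 0 < P x) ∧
      (∀ x : Fin p → ℝ, 0 ≤ x →
        Tendsto (fun k : ℕ => (lam ^ k)⁻¹ • M^[k] x) atTop (nhds (P x • zs))) := by
  have hM : IsConcavePosHom M := ⟨hnn, hconc, hhom⟩
  obtain ⟨n, hn⟩ := hprim
  have hlim := fun x (hx : 0 ≤ x) => tendsto_rescaledOrbit hM hlam hzs.1 heig (hn n le_rfl) hx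
  obtain ⟨hPnn, hPconc, hPhom⟩ :=
    (IsConcavePosHom.of_tendsto (fun k => (hM.iterate k).const_smul (inv_pos.mpr
      (pow_pos hlam k))) hlim).coeff_of_smul_const (hzs.1 0)
  exact ⟨limitFunctional M lam zs, hPnn, hPconc, hPhom,
    fun x hx hx0 => limitFunctional_pos hM hlam hzs.1 heig (hn n le_rfl) hx hx0, hlim⟩
end

section
/- Let (xₙ)ₙ≥0 be a positive real sequence such that xₙ ≥ c·α^{n−k}·x_k for all n ≥ k ≥ 0, with constants α > 1, c > 0. Let V be a nonnegative integrable random variable. Then Σ_{n≥0} xₙ·P(V > xₙ) ≤ (α/(c(α−1))) · E[V²/((c·x₀) ∨ V)]. -/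
/-!
Fix `ω` and let `M` be the largest index with `x M < V ω`. Geometric growth bounds every
`x n` with `n ≤ M` by `x M / (c α^(M-n))`, so the indices with `x n < V ω` contribute at most
`α/(c(α-1)) · x M ≤ α/(c(α-1)) · V ω`; and `V ω > x M ≥ c x₀` makes `V ω = V ω²/((c x₀) ∨ V ω)`.
Integrating this pointwise bound on each finite partial sum gives the claim.
-/

open MeasureTheory Finset

section Growth

variable {x : ℕ → ℝ} {c α : ℝ}

theorem sum_range_succ_le_of_growth (hc : 0 < c) (hα : 1 < α)
    (hgrowth : ∀ n k : ℕ, k ≤ n → c * α ^ (n - k) * x k ≤ x n) (M : ℕ) (hxM : 0 ≤ x M) :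
    ∑ n ∈ range (M + 1), x n ≤ α / (c * (α - 1)) * x M := by
  have hα0 : 0 < α := one_pos.trans hα
  have hterm : ∀ n ∈ range (M + 1), x n ≤ x M / c * α⁻¹ ^ (M - n) := by
    intro n hn
    have hnM : n ≤ M := Nat.lt_succ_iff.mp (mem_range.mp hn)
    rw [inv_pow, ← div_eq_mul_inv, div_div, le_div_iff₀ (by positivity), mul_comm]
    exact hgrowth M n hnM
  have hgeom : ∑ j ∈ range (M + 1), α⁻¹ ^ j ≤ (1 - α⁻¹)⁻¹ := by
    have h := geom_sum_Ico_le_of_lt_one (m := 0) (n := M + 1) (inv_nonneg.mpr hα0.le)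
      (inv_lt_one_of_one_lt₀ hα)
    rwa [← range_eq_Ico, pow_zero, one_div] at h
  calc ∑ n ∈ range (M + 1), x n
      ≤ ∑ n ∈ range (M + 1), x M / c * α⁻¹ ^ (M - n) := sum_le_sum hterm
    _ = x M / c * ∑ j ∈ range (M + 1), α⁻¹ ^ j := by
      rw [← sum_range_reflect (α⁻¹ ^ ·) (M + 1), mul_sum]
      simp
    _ ≤ x M / c * (1 - α⁻¹)⁻¹ := by gcongr
    _ = α / (c * (α - 1)) * x M := by field_simp

theorem sum_filter_lt_le_of_growth (hc : 0 < c) (hα : 1 < α) (hx : ∀ n, 0 ≤ x n)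
    (hgrowth : ∀ n k : ℕ, k ≤ n → c * α ^ (n - k) * x k ≤ x n) (s : Finset ℕ) (v : ℝ) :
    ∑ n ∈ s with x n < v, x n ≤ α / (c * (α - 1)) * (v ^ 2 / max (c * x 0) v) := by
  have hK : 0 ≤ α / (c * (α - 1)) := div_nonneg (by linarith) (mul_nonneg hc.le (by linarith))
  have hcx0 : 0 ≤ c * x 0 := mul_nonneg hc.le (hx 0)
  rcases (s.filter (x · < v)).eq_empty_or_nonempty with hT | hT
  · rw [hT, sum_empty]
    exact mul_nonneg hK (div_nonneg (sq_nonneg v) (hcx0.trans (le_max_left _ _)))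
  set M := (s.filter (x · < v)).max' hT
  have hMv : x M < v := (mem_filter.mp ((s.filter (x · < v)).max'_mem hT)).2
  have hcx0M : c * x 0 ≤ x M := calc
    c * x 0 = c * 1 * x 0 := by ring
    _ ≤ c * α ^ (M - 0) * x 0 :=
      mul_le_mul_of_nonneg_right (mul_le_mul_of_nonneg_left (one_le_pow₀ hα.le) hc.le) (hx 0)
    _ ≤ x M := hgrowth M 0 M.zero_le
  have hv : v ^ 2 / max (c * x 0) v = v := by
    rw [max_eq_right (hcx0M.trans hMv.le), sq, mul_div_cancel_right₀ _ ((hx M).trans_lt hMv).ne']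
  calc ∑ n ∈ s with x n < v, x n
      ≤ ∑ n ∈ range (M + 1), x n := by
        refine sum_le_sum_of_subset_of_nonneg (fun n hn => ?_) fun n _ _ => hx n
        exact mem_range.mpr (Nat.lt_succ_of_le ((s.filter (x · < v)).le_max' n hn))
    _ ≤ α / (c * (α - 1)) * x M := sum_range_succ_le_of_growth hc hα hgrowth M (hx M)
    _ ≤ α / (c * (α - 1)) * (v ^ 2 / max (c * x 0) v) := by
        rw [hv]
        exact mul_le_mul_of_nonneg_left hMv.le hK

end Growth

theorem MeasureTheory.Integrable.sq_div_max {Ω : Type*} [MeasurableSpace Ω] {μ : Measure Ω}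
    {V : Ω → ℝ} (hV : Integrable V μ) (hVnn : ∀ ω, 0 ≤ V ω) {a : ℝ} (ha : 0 < a) :
    Integrable (fun ω => V ω ^ 2 / max a (V ω)) μ := by
  refine hV.mono' ?_ (ae_of_all _ fun ω => ?_)
  · exact ((hV.aemeasurable.pow_const 2).div (aemeasurable_const.max hV.aemeasurable))
      |>.aestronglyMeasurable
  · have hmax : 0 < max a (V ω) := ha.trans_le (le_max_left _ _)
    rw [Real.norm_of_nonneg (div_nonneg (sq_nonneg _) hmax.le), div_le_iff₀ hmax, sq]
    exact mul_le_mul_of_nonneg_left (le_max_right _ _) (hVnn ω)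

/-- For a positive sequence `xₙ ≥ c·α^{n−k}·x_k` (`α > 1`, `c > 0`) and a nonnegative
integrable random variable `V`:
`Σₙ xₙ·P(V > xₙ) ≤ (α/(c(α−1))) · E[V²/((c·x₀) ∨ V)]`. -/
theorem tail_sum_bound {Ω : Type*} [MeasurableSpace Ω]
    (μ : Measure Ω) [IsProbabilityMeasure μ]
    (x : ℕ → ℝ) (c α : ℝ) (hc : 0 < c) (hα : 1 < α)
    (hxpos : ∀ n, 0 < x n)
    (hgrowth : ∀ n k : ℕ, k ≤ n → c * α ^ (n - k) * x k ≤ x n)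
    (V : Ω → ℝ) (hVnn : ∀ ω, 0 ≤ V ω) (hVint : Integrable V μ)
    (hVmeas : Measurable V) :
    ∑' n : ℕ, x n * (μ {ω | x n < V ω}).toReal
      ≤ (α / (c * (α - 1))) * ∫ ω, (V ω) ^ 2 / max (c * x 0) (V ω) ∂μ := by
  have hsets : ∀ n, MeasurableSet {ω | x n < V ω} := fun n =>
    measurableSet_lt measurable_const hVmeas
  have hind : ∀ n, Integrable ({ω | x n < V ω}.indicator fun _ => x n) μ := fun n =>
    (integrable_const _).indicator (hsets n)
  refine Real.tsum_le_of_sum_range_le (fun n => mul_nonneg (hxpos n).le ENNReal.toReal_nonneg)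
    fun N => ?_
  calc ∑ n ∈ range N, x n * (μ {ω | x n < V ω}).toReal
      = ∫ ω, ∑ n ∈ range N, {ω | x n < V ω}.indicator (fun _ => x n) ω ∂μ := by
        rw [integral_finsetSum _ fun n _ => hind n]
        refine sum_congr rfl fun n _ => ?_
        rw [integral_indicator_const _ (hsets n), smul_eq_mul, mul_comm, measureReal_def]
    _ ≤ ∫ ω, α / (c * (α - 1)) * (V ω ^ 2 / max (c * x 0) (V ω)) ∂μ := by
        refine integral_mono (integrable_finsetSum _ fun n _ => hind n)
          ((hVint.sq_div_max hVnn (mul_pos hc (hxpos 0))).const_mul _) fun ω => ?_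
        simpa only [Set.indicator_apply, Set.mem_ofPred_eq, ← sum_filter] using
          sum_filter_lt_le_of_growth hc hα (fun n => (hxpos n).le) hgrowth (range N) (V ω)
    _ = α / (c * (α - 1)) * ∫ ω, V ω ^ 2 / max (c * x 0) (V ω) ∂μ := integral_const_mul _ _
end

section
/- Let (xₙ)ₙ≥0 be a positive sequence satisfying xₙ ≥ c·α^{n−k}·x_k for all n ≥ k ≥ 0 with α > 1, c > 0, and let V be a nonnegative integrable random variable. Then Σ_{n≥0} E[V²·1_{V ≤ xₙ}]/xₙ ≤ (α/(c(α−1))) · E[V²/((c·x₀) ∨ V)]. -/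
/-!
Fix `v` and let `N` be the first index (among those summed) with `v ≤ x N`. Only indices
`n ≥ N` contribute, and from `x N ≥ max (c * x 0) v` on the sequence grows at least like
`c * α ^ (n - N)`, so `∑ v² / x n` is dominated by a geometric series with sum
`α / (c * (α - 1)) * v² / max (c * x 0) v`. Integrating this pointwise bound over finite
partial sums gives the theorem.
-/

open MeasureTheory Finset

def GrowsGeometrically (c α : ℝ) (x : ℕ → ℝ) : Prop :=
  ∀ n k : ℕ, k ≤ n → c * α ^ (n - k) * x k ≤ x n

namespace GrowsGeometrically

variable {c α : ℝ} {x : ℕ → ℝ}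

theorem mul_initial_le (hx : GrowsGeometrically c α x) (hc : 0 ≤ c) (hα : 1 ≤ α)
    (hx0 : 0 ≤ x 0) (n : ℕ) : c * x 0 ≤ x n :=
  calc c * x 0 = 1 * (c * x 0) := (one_mul _).symm
    _ ≤ α ^ n * (c * x 0) := by gcongr; exact one_le_pow₀ hα
    _ = c * α ^ (n - 0) * x 0 := by rw [Nat.sub_zero]; ring
    _ ≤ x n := hx n 0 n.zero_le

theorem sum_inv_le (hx : GrowsGeometrically c α x) (hc : 0 < c) (hα : 1 < α) {N : ℕ}
    (hxN : 0 < x N) {s : Finset ℕ} (hs : ∀ n ∈ s, N ≤ n) :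
    ∑ n ∈ s, (x n)⁻¹ ≤ α / (c * (α - 1)) * (x N)⁻¹ := by
  have hα₀ : 0 < α := zero_lt_one.trans hα
  have hr₀ : 0 ≤ α⁻¹ := inv_nonneg.2 hα₀.le
  have hr₁ : α⁻¹ < 1 := inv_lt_one_of_one_lt₀ hα
  have hterm : ∀ n ∈ s, (x n)⁻¹ ≤ (c * x N)⁻¹ * α⁻¹ ^ (n - N) := fun n hn => by
    calc (x n)⁻¹ ≤ (c * α ^ (n - N) * x N)⁻¹ := inv_anti₀ (by positivity) (hx n N (hs n hn))
      _ = (c * x N)⁻¹ * α⁻¹ ^ (n - N) := by rw [inv_pow]; ring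
  have hinj : Set.InjOn (· - N) (s : Set ℕ) := fun m hm n hn h => by
    have := hs m hm; have := hs n hn; simp only at h; omega
  calc ∑ n ∈ s, (x n)⁻¹ ≤ ∑ n ∈ s, (c * x N)⁻¹ * α⁻¹ ^ (n - N) := sum_le_sum hterm
    _ = (c * x N)⁻¹ * ∑ k ∈ s.image (· - N), α⁻¹ ^ k := by rw [mul_sum, sum_image hinj]
    _ ≤ (c * x N)⁻¹ * ∑' k, α⁻¹ ^ k := by
        gcongr
        exact (summable_geometric_of_lt_one hr₀ hr₁).sum_le_tsum _ fun k _ => by positivity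
    _ = α / (c * (α - 1)) * (x N)⁻¹ := by
        rw [tsum_geometric_of_lt_one hr₀ hr₁]
        have : α - 1 ≠ 0 := (sub_pos.2 hα).ne'
        field_simp

theorem sum_ite_sq_div_le (hx : GrowsGeometrically c α x) (hc : 0 < c) (hα : 1 < α)
    (hx0 : 0 < x 0) (v : ℝ) (s : Finset ℕ) :
    ∑ n ∈ s, (if v ≤ x n then v ^ 2 else 0) / x n
      ≤ α / (c * (α - 1)) * (v ^ 2 / max (c * x 0) v) := by
  have hm : 0 < max (c * x 0) v := lt_max_of_lt_left (mul_pos hc hx0)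
  set t := s.filter (fun n => v ≤ x n)
  have hsum : ∑ n ∈ s, (if v ≤ x n then v ^ 2 else 0) / x n = v ^ 2 * ∑ n ∈ t, (x n)⁻¹ := by
    rw [mul_sum, sum_filter]
    simp only [div_eq_mul_inv, ite_mul, zero_mul]
  rw [hsum]
  rcases t.eq_empty_or_nonempty with ht | ht
  · rw [ht, sum_empty, mul_zero]
    have : 0 ≤ α - 1 := sub_nonneg.2 hα.le
    positivity
  set N := t.min' ht
  obtain ⟨-, hvN⟩ := mem_filter.1 (t.min'_mem ht)
  have hmN : max (c * x 0) v ≤ x N :=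
    max_le (hx.mul_initial_le hc.le hα.le hx0.le N) hvN
  calc v ^ 2 * ∑ n ∈ t, (x n)⁻¹ ≤ v ^ 2 * (α / (c * (α - 1)) * (x N)⁻¹) := by
        gcongr
        exact hx.sum_inv_le hc hα (hm.trans_le hmN) fun n hn => t.min'_le n hn
    _ ≤ v ^ 2 * (α / (c * (α - 1)) * (max (c * x 0) v)⁻¹) := by
        have : 0 ≤ α - 1 := sub_nonneg.2 hα.le
        gcongr
    _ = α / (c * (α - 1)) * (v ^ 2 / max (c * x 0) v) := by ring

end GrowsGeometrically

section Integrability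

variable {Ω : Type*} [MeasurableSpace Ω] {μ : Measure Ω} {V : Ω → ℝ}

theorem integrable_ite_le_sq (hVnn : ∀ ω, 0 ≤ V ω) (hVint : Integrable V μ) {a : ℝ}
    (ha : 0 ≤ a) : Integrable (fun ω => if V ω ≤ a then V ω ^ 2 else 0) μ := by
  have hmeas : Measurable fun t : ℝ => if t ≤ a then t ^ 2 else 0 :=
    Measurable.ite measurableSet_Iic (measurable_id.pow_const 2) measurable_const
  refine (hVint.const_mul a).mono (hmeas.comp_aemeasurable hVint.aemeasurable).aestronglyMeasurable
    (ae_of_all _ fun ω => ?_)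
  have hV := hVnn ω
  simp only [Real.norm_eq_abs, abs_of_nonneg (mul_nonneg ha hV)]
  split_ifs with h
  · rw [abs_of_nonneg (sq_nonneg _)]; nlinarith
  · simpa using mul_nonneg ha hV

theorem integrable_sq_div_max (hVnn : ∀ ω, 0 ≤ V ω) (hVint : Integrable V μ) {b : ℝ}
    (hb : 0 < b) : Integrable (fun ω => V ω ^ 2 / max b (V ω)) μ := by
  have hmeas : Measurable fun t : ℝ => t ^ 2 / max b t :=
    (measurable_id.pow_const 2).div (measurable_const.max measurable_id)
  refine hVint.mono (hmeas.comp_aemeasurable hVint.aemeasurable).aestronglyMeasurable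
    (ae_of_all _ fun ω => ?_)
  have hV := hVnn ω
  have hm : 0 < max b (V ω) := lt_max_of_lt_left hb
  simp only [Real.norm_eq_abs, abs_of_nonneg hV, abs_of_nonneg (by positivity : 0 ≤ V ω ^ 2 / max b (V ω)), div_le_iff₀ hm]
  nlinarith [le_max_right b (V ω)]

end Integrability

theorem truncated_second_moment_sum_bound_general {Ω : Type*} [MeasurableSpace Ω]
    (μ : Measure Ω)
    (x : ℕ → ℝ) (c α : ℝ) (hc : 0 < c) (hα : 1 < α)
    (hxpos : ∀ n, 0 < x n)
    (hgrowth : ∀ n k : ℕ, k ≤ n → c * α ^ (n - k) * x k ≤ x n)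
    (V : Ω → ℝ) (hVnn : ∀ ω, 0 ≤ V ω) (hVint : Integrable V μ) :
    ∑' n : ℕ, (∫ ω, (if V ω ≤ x n then (V ω) ^ 2 else 0) ∂μ) / x n
      ≤ (α / (c * (α - 1))) * ∫ ω, (V ω) ^ 2 / max (c * x 0) (V ω) ∂μ := by
  have hcx : 0 < c * x 0 := mul_pos hc (hxpos 0)
  have hα₁ : 0 ≤ α - 1 := sub_nonneg.2 hα.le
  have hint : ∀ n, Integrable (fun ω => (if V ω ≤ x n then V ω ^ 2 else 0) / x n) μ :=
    fun n => (integrable_ite_le_sq hVnn hVint (hxpos n).le).div_const _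
  have hnonneg : 0 ≤ ∫ ω, V ω ^ 2 / max (c * x 0) (V ω) ∂μ :=
    integral_nonneg fun ω => div_nonneg (sq_nonneg _) (hcx.le.trans (le_max_left _ _))
  refine tsum_le_of_sum_le' (by positivity) fun s => ?_
  calc ∑ n ∈ s, (∫ ω, (if V ω ≤ x n then V ω ^ 2 else 0) ∂μ) / x n
      = ∫ ω, ∑ n ∈ s, (if V ω ≤ x n then V ω ^ 2 else 0) / x n ∂μ := by
        simp only [← integral_div]; exact (integral_finsetSum s fun n _ => hint n).symm
    _ ≤ ∫ ω, α / (c * (α - 1)) * (V ω ^ 2 / max (c * x 0) (V ω)) ∂μ :=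
        integral_mono (integrable_finsetSum s fun n _ => hint n)
          ((integrable_sq_div_max hVnn hVint hcx).const_mul _) fun ω =>
          GrowsGeometrically.sum_ite_sq_div_le hgrowth hc hα (hxpos 0) (V ω) s
    _ = α / (c * (α - 1)) * ∫ ω, V ω ^ 2 / max (c * x 0) (V ω) ∂μ := integral_const_mul _ _

/-- For a positive sequence `xₙ ≥ c·α^{n−k}·x_k` (`α > 1`, `c > 0`) and a nonnegative
integrable random variable `V`:
`Σₙ E[V²·1_{V ≤ xₙ}]/xₙ ≤ (α/(c(α−1))) · E[V²/((c·x₀) ∨ V)]`. -/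
theorem truncated_second_moment_sum_bound {Ω : Type*} [MeasurableSpace Ω]
    (μ : Measure Ω) [IsProbabilityMeasure μ]
    (x : ℕ → ℝ) (c α : ℝ) (hc : 0 < c) (hα : 1 < α)
    (hxpos : ∀ n, 0 < x n)
    (hgrowth : ∀ n k : ℕ, k ≤ n → c * α ^ (n - k) * x k ≤ x n)
    (V : Ω → ℝ) (hVnn : ∀ ω, 0 ≤ V ω) (hVint : Integrable V μ)
    (hVmeas : Measurable V) :
    ∑' n : ℕ, (∫ ω, (if V ω ≤ x n then (V ω) ^ 2 else 0) ∂μ) / x n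
      ≤ (α / (c * (α - 1))) * ∫ ω, (V ω) ^ 2 / max (c * x 0) (V ω) ∂μ :=
  truncated_second_moment_sum_bound_general μ x c α hc hα hxpos hgrowth V hVnn hVint
end

section
/- Let X₁,…,X_p be independent nonnegative integrable random variables, z ∈ ℕ^p, β > 0, and (X^{(k)})_{k∈ℕ} i.i.d. copies of (X₁,…,X_p). Then E[|Σ_{i=1}^p Σ_{k=1}^{z_i} (X_i^{(k)} − E X_i)|] ≤ |z|^{β+1/2} + 2|z|·Σ_{i=1}^p E[X_i·1_{X_i > |z|^β}], where |z| = z₁+…+z_p. -/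
/-!
Split each summand at the level `T = |z|^β` into `X 1_{X ≤ T} + X 1_{X > T}`. The centred
bounded parts are independent with variance at most `T²`, so by Cauchy–Schwarz their sum has
`L¹` norm at most `√|z| · T = |z|^{β+1/2}`. Each centred nonnegative tail part has `L¹` norm at
most twice its mean, and there are at most `|z|` copies of each coordinate.
-/

open MeasureTheory ProbabilityTheory

section

variable {Ω : Type*} [MeasurableSpace Ω] {μ : Measure Ω} {ι : Type*} {s : Finset ι}

lemma integral_abs_sum_le_sum_integral_abs {f : ι → Ω → ℝ}
    (hf : ∀ i ∈ s, Integrable (f i) μ) :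
    ∫ ω, |∑ i ∈ s, f i ω| ∂μ ≤ ∑ i ∈ s, ∫ ω, |f i ω| ∂μ := by
  rw [← integral_finsetSum s fun i hi => (hf i hi).abs]
  exact integral_mono (integrable_finsetSum s hf).abs
    (integrable_finsetSum s fun i hi => (hf i hi).abs) fun ω => Finset.abs_sum_le_sum_abs _ _

variable [IsProbabilityMeasure μ]

lemma sq_integral_abs_le_integral_sq {f : Ω → ℝ} (hf : MemLp f 2 μ) :
    (∫ ω, |f ω| ∂μ) ^ 2 ≤ ∫ ω, f ω ^ 2 ∂μ := by
  have hvar := variance_eq_sub (X := fun ω => |f ω|) hf.abs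
  simp only [Pi.pow_apply, sq_abs] at hvar
  linarith [variance_nonneg (fun ω => |f ω|) μ]

lemma integral_abs_sub_integral_le_sqrt_variance {f : Ω → ℝ}
    (hf : MemLp f 2 μ) :
    ∫ ω, |f ω - ∫ ω', f ω' ∂μ| ∂μ ≤ Real.sqrt (variance f μ) := by
  rw [variance_eq_integral hf.aemeasurable]
  exact Real.le_sqrt_of_sq_le (sq_integral_abs_le_integral_sq (hf.sub (memLp_const _)))

lemma integral_abs_sub_integral_le_two_mul_integral {f : Ω → ℝ}
    (hf : Integrable f μ) (hnn : 0 ≤ᵐ[μ] f) :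
    ∫ ω, |f ω - ∫ ω', f ω' ∂μ| ∂μ ≤ 2 * ∫ ω, f ω ∂μ := by
  have hmean : 0 ≤ ∫ ω, f ω ∂μ := integral_nonneg_of_ae hnn
  calc ∫ ω, |f ω - ∫ ω', f ω' ∂μ| ∂μ ≤ ∫ ω, (f ω + ∫ ω', f ω' ∂μ) ∂μ := by
        refine integral_mono_ae (hf.sub (integrable_const _)).abs
          (hf.add (integrable_const _)) ?_
        filter_upwards [hnn] with ω hω
        have hω : 0 ≤ f ω := hω
        exact abs_le.mpr ⟨by linarith, by linarith⟩
    _ = 2 * ∫ ω, f ω ∂μ := by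
        rw [integral_add hf (integrable_const _), integral_const, probReal_univ, one_smul, two_mul]

lemma integral_abs_sum_sub_integral_le_of_abs_le {Y : ι → Ω → ℝ} {T : ℝ} (hT : 0 ≤ T)
    (hY : ∀ i ∈ s, AEStronglyMeasurable (Y i) μ) (hbound : ∀ i ∈ s, ∀ᵐ ω ∂μ, |Y i ω| ≤ T)
    (hindep : Set.Pairwise ↑s fun i j => IndepFun (Y i) (Y j) μ) :
    ∫ ω, |∑ i ∈ s, (Y i ω - ∫ ω', Y i ω' ∂μ)| ∂μ ≤ Real.sqrt s.card * T := by
  have hL2 : ∀ i ∈ s, MemLp (Y i) 2 μ := fun i hi => MemLp.of_bound (hY i hi) T (hbound i hi)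
  have hvar : variance (∑ i ∈ s, Y i) μ ≤ s.card * T ^ 2 := by
    rw [IndepFun.variance_sum hL2 hindep]
    refine (Finset.sum_le_card_nsmul _ _ _ fun i hi => ?_).trans_eq (nsmul_eq_mul _ _)
    have := variance_le_sq_of_bounded (a := -T) (b := T)
      ((hbound i hi).mono fun ω hω => abs_le.mp hω) (hY i hi).aemeasurable
    simpa using this
  have hcenter : ∀ ω, ∑ i ∈ s, (Y i ω - ∫ ω', Y i ω' ∂μ)
      = (∑ i ∈ s, Y i) ω - ∫ ω', (∑ i ∈ s, Y i) ω' ∂μ := fun ω => by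
    simp only [Finset.sum_apply, Finset.sum_sub_distrib]
    rw [integral_finsetSum s fun i hi => (hL2 i hi).integrable one_le_two]
  simp only [hcenter]
  calc _ ≤ Real.sqrt (variance (∑ i ∈ s, Y i) μ) :=
        integral_abs_sub_integral_le_sqrt_variance (memLp_finsetSum' s hL2)
    _ ≤ Real.sqrt (s.card * T ^ 2) := Real.sqrt_le_sqrt hvar
    _ = Real.sqrt s.card * T := by rw [Real.sqrt_mul (Nat.cast_nonneg _), Real.sqrt_sq hT]

lemma integral_abs_sum_sub_integral_le_of_nonneg {Z : ι → Ω → ℝ}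
    (hZ : ∀ i ∈ s, Integrable (Z i) μ) (hnn : ∀ i ∈ s, 0 ≤ᵐ[μ] Z i) :
    ∫ ω, |∑ i ∈ s, (Z i ω - ∫ ω', Z i ω' ∂μ)| ∂μ ≤ 2 * ∑ i ∈ s, ∫ ω, Z i ω ∂μ := by
  calc _ ≤ ∑ i ∈ s, ∫ ω, |Z i ω - ∫ ω', Z i ω' ∂μ| ∂μ :=
        integral_abs_sum_le_sum_integral_abs fun i hi => (hZ i hi).sub (integrable_const _)
    _ ≤ ∑ i ∈ s, 2 * ∫ ω, Z i ω ∂μ := Finset.sum_le_sum fun i hi =>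
        integral_abs_sub_integral_le_two_mul_integral (hZ i hi) (hnn i hi)
    _ = 2 * ∑ i ∈ s, ∫ ω, Z i ω ∂μ := (Finset.mul_sum _ _ _).symm

theorem integral_abs_sum_sub_integral_le_truncation {Y : ι → Ω → ℝ} {T : ℝ} (hT : 0 ≤ T)
    (hY : ∀ i ∈ s, Integrable (Y i) μ) (hnn : ∀ i ∈ s, 0 ≤ᵐ[μ] Y i)
    (hindep : Set.Pairwise ↑s fun i j => IndepFun (Y i) (Y j) μ) :
    ∫ ω, |∑ i ∈ s, (Y i ω - ∫ ω', Y i ω' ∂μ)| ∂μ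
      ≤ Real.sqrt s.card * T + 2 * ∑ i ∈ s, ∫ ω, (if T < Y i ω then Y i ω else 0) ∂μ := by
  set low : ℝ → ℝ := fun x => if x ≤ T then x else 0
  set high : ℝ → ℝ := fun x => if T < x then x else 0
  have hlow : Measurable low := Measurable.ite measurableSet_Iic measurable_id measurable_const
  have hhigh : Measurable high := Measurable.ite measurableSet_Ioi measurable_id measurable_const
  have hlow_add_high : ∀ x, low x + high x = x := fun x => by
    by_cases hx : x ≤ T <;> simp [low, high, hx, not_lt.mpr, not_le.mp]
  have hintegrable : ∀ {φ : ℝ → ℝ}, Measurable φ → (∀ x, |φ x| ≤ |x|) →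
      ∀ i ∈ s, Integrable (fun ω => φ (Y i ω)) μ := fun hφ hφle i hi =>
    (hY i hi).mono (hφ.comp_aemeasurable (hY i hi).aemeasurable).aestronglyMeasurable
      (ae_of_all _ fun ω => hφle _)
  have hlow_int := hintegrable hlow fun x => by simp only [low]; split_ifs <;> simp
  have hhigh_int := hintegrable hhigh fun x => by simp only [high]; split_ifs <;> simp
  set A : Ω → ℝ := fun ω => ∑ i ∈ s, (low (Y i ω) - ∫ ω', low (Y i ω') ∂μ)
  set B : Ω → ℝ := fun ω => ∑ i ∈ s, (high (Y i ω) - ∫ ω', high (Y i ω') ∂μ)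
  have hAB : ∀ ω, ∑ i ∈ s, (Y i ω - ∫ ω', Y i ω' ∂μ) = A ω + B ω := fun ω => by
    simp only [A, B, ← Finset.sum_add_distrib]
    refine Finset.sum_congr rfl fun i hi => ?_
    have hmean : ∫ ω', Y i ω' ∂μ = ∫ ω', low (Y i ω') ∂μ + ∫ ω', high (Y i ω') ∂μ := by
      simp only [← integral_add (hlow_int i hi) (hhigh_int i hi), hlow_add_high]
    linarith [hlow_add_high (Y i ω)]
  have hA : ∫ ω, |A ω| ∂μ ≤ Real.sqrt s.card * T := by
    refine integral_abs_sum_sub_integral_le_of_abs_le hT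
      (fun i hi => (hlow_int i hi).aestronglyMeasurable) (fun i hi => ?_)
      fun i hi j hj hij => (hindep hi hj hij).comp hlow hlow
    filter_upwards [hnn i hi] with ω hω
    have hω : 0 ≤ Y i ω := hω
    simp only [low]
    split_ifs with h
    · rwa [abs_of_nonneg hω]
    · simpa using hT
  have hB : ∫ ω, |B ω| ∂μ ≤ 2 * ∑ i ∈ s, ∫ ω, high (Y i ω) ∂μ :=
    integral_abs_sum_sub_integral_le_of_nonneg hhigh_int fun i _ => ae_of_all _ fun ω =>
      show 0 ≤ high (Y i ω) by simp only [high]; split_ifs with h <;> linarith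
  have hAint : Integrable A μ := integrable_finsetSum s fun i hi =>
    (hlow_int i hi).sub (integrable_const _)
  have hBint : Integrable B μ := integrable_finsetSum s fun i hi =>
    (hhigh_int i hi).sub (integrable_const _)
  calc _ = ∫ ω, |A ω + B ω| ∂μ := by simp only [hAB]
    _ ≤ ∫ ω, |A ω| ∂μ + ∫ ω, |B ω| ∂μ := by
        rw [← integral_add hAint.abs hBint.abs]
        exact integral_mono (hAint.add hBint).abs (hAint.abs.add hBint.abs)
          fun ω => abs_add_le _ _
    _ ≤ _ := add_le_add hA hB

end

section

variable {ι : Type*} [Fintype ι]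

/-- The index set `{(k, i) | k < z i}` of the first `z i` copies of each coordinate `i`. -/
def copyIndex (z : ι → ℕ) : Finset (ℕ × ι) :=
  (Finset.univ.sigma fun i => Finset.range (z i)).map
    ((Equiv.sigmaEquivProd ι ℕ).trans (Equiv.prodComm ι ℕ)).toEmbedding

lemma sum_copyIndex {M : Type*} [AddCommMonoid M] (z : ι → ℕ) (f : ℕ × ι → M) :
    ∑ ki ∈ copyIndex z, f ki = ∑ i, ∑ k ∈ Finset.range (z i), f (k, i) := by
  rw [copyIndex, Finset.sum_map, Finset.sum_sigma]
  rfl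

lemma card_copyIndex (z : ι → ℕ) : (copyIndex z).card = ∑ i, z i := by
  simp [copyIndex]

end

theorem truncation_L1_bound_general {Ω : Type*} [MeasurableSpace Ω]
    (μ : Measure Ω) [IsProbabilityMeasure μ] {p : ℕ}
    (X : ℕ → Fin p → Ω → ℝ)
    (hnn : ∀ k i ω, 0 ≤ X k i ω)
    (hint : ∀ k i, Integrable (X k i) μ)
    (hindep : iIndepFun (fun ki : ℕ × Fin p => X ki.1 ki.2) μ)
    (hident : ∀ k i, IdentDistrib (X k i) (X 0 i) μ μ)
    (z : Fin p → ℕ) (β : ℝ) (hβ : 0 < β) :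
    ∫ ω, |∑ i, ∑ k ∈ Finset.range (z i), (X k i ω - ∫ ω', X 0 i ω' ∂μ)| ∂μ
      ≤ ((∑ i, z i : ℕ) : ℝ) ^ (β + 1/2)
        + 2 * ((∑ i, z i : ℕ) : ℝ) *
          ∑ i, ∫ ω, (if ((∑ i, z i : ℕ) : ℝ) ^ β < X 0 i ω then X 0 i ω else 0) ∂μ := by
  set N : ℕ := ∑ i, z i
  set T : ℝ := (N : ℝ) ^ β
  set tail : Fin p → ℝ := fun i => ∫ ω, (if T < X 0 i ω then X 0 i ω else 0) ∂μ
  have hmean : ∀ k i, ∫ ω, X k i ω ∂μ = ∫ ω, X 0 i ω ∂μ := fun k i => (hident k i).integral_eq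
  have htail : ∀ k i, ∫ ω, (if T < X k i ω then X k i ω else 0) ∂μ = tail i := fun k i =>
    ((hident k i).comp
      (Measurable.ite measurableSet_Ioi measurable_id measurable_const)).integral_eq
  have key := integral_abs_sum_sub_integral_le_truncation (μ := μ) (s := copyIndex z)
    (Y := fun ki => X ki.1 ki.2) (by positivity : 0 ≤ T) (fun ki _ => hint ki.1 ki.2)
    (fun ki _ => ae_of_all _ (hnn ki.1 ki.2)) fun a _ b _ hab => hindep.indepFun hab
  simp only [sum_copyIndex, card_copyIndex, hmean, htail] at key
  have hsqrt : Real.sqrt N * T = (N : ℝ) ^ (β + 1/2) := by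
    rw [Real.sqrt_eq_rpow, Real.rpow_add' (Nat.cast_nonneg _) (by positivity), mul_comm]
  have htail_le : ∑ i, ∑ _k ∈ Finset.range (z i), tail i ≤ N * ∑ i, tail i := by
    simp only [Finset.sum_const, Finset.card_range, nsmul_eq_mul, Finset.mul_sum]
    gcongr with i
    · exact integral_nonneg fun ω => by dsimp only; split_ifs <;> simp [hnn]
    · exact_mod_cast Finset.single_le_sum (fun j _ => Nat.zero_le (z j)) (Finset.mem_univ i)
  calc _ ≤ _ := key
    _ ≤ _ := by rw [hsqrt, mul_assoc]; gcongr

/-- For independent nonnegative integrable random variables `X₁,…,X_p`, i.i.d. copies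
`(X^{(k)})_k`, `z ∈ ℕ^p` and `β > 0`:
`E[|Σᵢ Σ_{k<zᵢ} (Xᵢ^{(k)} − E Xᵢ)|] ≤ |z|^{β+1/2} + 2|z|·Σᵢ E[Xᵢ·1_{Xᵢ > |z|^β}]`,
where `|z| = z₁+⋯+z_p`. -/
theorem truncation_L1_bound {Ω : Type*} [MeasurableSpace Ω]
    (μ : Measure Ω) [IsProbabilityMeasure μ] {p : ℕ}
    (X : ℕ → Fin p → Ω → ℝ)
    (hmeas : ∀ k i, Measurable (X k i))
    (hnn : ∀ k i ω, 0 ≤ X k i ω)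
    (hint : ∀ k i, Integrable (X k i) μ)
    (hindep : iIndepFun (fun ki : ℕ × Fin p => X ki.1 ki.2) μ)
    (hident : ∀ k i, IdentDistrib (X k i) (X 0 i) μ μ)
    (z : Fin p → ℕ) (β : ℝ) (hβ : 0 < β) :
    ∫ ω, |∑ i, ∑ k ∈ Finset.range (z i), (X k i ω - ∫ ω', X 0 i ω' ∂μ)| ∂μ
      ≤ ((∑ i, z i : ℕ) : ℝ) ^ (β + 1/2)
        + 2 * ((∑ i, z i : ℕ) : ℝ) *
          ∑ i, ∫ ω, (if ((∑ i, z i : ℕ) : ℝ) ^ β < X 0 i ω then X 0 i ω else 0) ∂μ :=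
  truncation_L1_bound_general μ X hnn hint hindep hident z β hβ
end

section
/- Let (Zₙ) be a multi-type bisexual Galton-Watson process with superadditive mating function. For all z₀, z̃₀, z₁, z̃₁ ∈ ℕ^p and n ≥ 1: P(Zₙ ≥ z₁ + z̃₁ | Z₀ = z₀ + z̃₀) ≥ P(Zₙ ≥ z₁ | Z₀ = z₀) · P(Zₙ ≥ z̃₁ | Z₀ = z̃₀), where ≥ between vectors is componentwise. -/
/-!
Split the population started from `z₀ + z₀'` into two subpopulations that use disjoint offspring
vectors: in generation `t` the first one, of size `A`, uses the individuals `k < A i` of each type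
`i`, and the second one, of size `B`, the individuals `A i ≤ k < A i + B i`. Superadditivity of
`ξ` (which makes `ξ` monotone) keeps `A + B` below the process started from `z₀ + z₀'`. The two
blocks of a generation are independent of each other and of the past, and the law of a block
does not depend on its offset, so `(Aₙ, Bₙ)` is distributed as two independent copies of `Zₙ`
started from `z₀` and `z₀'`.
-/

open MeasureTheory ProbabilityTheory

theorem Measurable.eval_of_countable {Ω α β : Type*} {_ : MeasurableSpace Ω} [MeasurableSpace α]
    [Countable α] [MeasurableSingletonClass α] [MeasurableSpace β]
    {G : α → Ω → β} (hG : ∀ a, Measurable (G a)) {X : Ω → α} (hX : Measurable X) :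
    Measurable fun ω => G (X ω) ω :=
  (measurable_from_prod_countable_left (f := fun x : Ω × α => G x.2 x.1) hG).comp
    (measurable_id.prodMk hX)

theorem monotone_of_superadditive {ι κ : Type*} {ξ : (ι → ℕ) → (κ → ℕ)}
    (hξ : ∀ x y, ξ x + ξ y ≤ ξ (x + y)) : Monotone ξ := fun x y hxy =>
  calc ξ x ≤ ξ x + ξ (y - x) := le_self_add
    _ ≤ ξ (x + (y - x)) := hξ x (y - x)
    _ = ξ y := by rw [add_tsub_cancel_of_le hxy]

theorem measure_preimage_eq_tsum_mul_of_indep {Ω α β : Type*} {mΩ : MeasurableSpace Ω}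
    {μ : Measure Ω} [MeasurableSpace α] [Countable α] [MeasurableSingletonClass α]
    [MeasurableSpace β] [MeasurableSingletonClass β] {m₁ m₂ : MeasurableSpace Ω}
    (hm₁ : m₁ ≤ mΩ) (hm₂ : m₂ ≤ mΩ) (h₁₂ : Indep m₁ m₂ μ) {X : Ω → α} (hX : Measurable[m₁] X)
    {G : α → Ω → β} (hG : ∀ a, Measurable[m₂] (G a)) {Y : Ω → β}
    (hY : ∀ ω, Y ω = G (X ω) ω) (c : β) :
    μ (Y ⁻¹' {c}) = ∑' a, μ (X ⁻¹' {a}) * μ (G a ⁻¹' {c}) := by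
  have hfibers : Y ⁻¹' {c} = ⋃ a, X ⁻¹' {a} ∩ G a ⁻¹' {c} := by
    ext ω
    simp [hY]
  rw [hfibers, measure_iUnion]
  · exact tsum_congr fun a => (Indep_iff _ _ _).1 h₁₂ _ _ (hX (measurableSet_singleton a))
      (hG a (measurableSet_singleton c))
  · exact fun a a' haa' => ((Set.disjoint_singleton.2 haa').preimage X).mono
      Set.inter_subset_left Set.inter_subset_left
  · exact fun a => (hm₁ _ (hX (measurableSet_singleton a))).inter
      (hm₂ _ (hG a (measurableSet_singleton c)))

theorem measure_preimage_prod_eq_mul_of_singleton {Ω α β : Type*} {_ : MeasurableSpace Ω}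
    {μ : Measure Ω} [IsFiniteMeasure μ] [MeasurableSpace α] [Countable α]
    [MeasurableSingletonClass α] [MeasurableSpace β] [Countable β] [MeasurableSingletonClass β]
    {Y : Ω → α × β} {X₁ : Ω → α} {X₂ : Ω → β} (hY : Measurable Y) (hX₁ : Measurable X₁)
    (hX₂ : Measurable X₂) (h : ∀ a b, μ (Y ⁻¹' {(a, b)}) = μ (X₁ ⁻¹' {a}) * μ (X₂ ⁻¹' {b}))
    (s : Set α) (t : Set β) :
    μ (Y ⁻¹' s ×ˢ t) = μ (X₁ ⁻¹' s) * μ (X₂ ⁻¹' t) := by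
  have hlaw : μ.map Y = (μ.map X₁).prod (μ.map X₂) := by
    refine Measure.ext_of_singleton fun ⟨a, b⟩ => ?_
    rw [← Set.singleton_prod_singleton, Measure.prod_prod, Set.singleton_prod_singleton,
      Measure.map_apply hY (measurableSet_singleton _), h,
      Measure.map_apply hX₁ (measurableSet_singleton _),
      Measure.map_apply hX₂ (measurableSet_singleton _)]
  rw [← Measure.map_apply hY (s ×ˢ t).to_countable.measurableSet, hlaw, Measure.prod_prod,
    Measure.map_apply hX₁ s.to_countable.measurableSet,
    Measure.map_apply hX₂ t.to_countable.measurableSet]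

namespace BisexualGW

section

variable {Ω : Type*} {p q : ℕ} {V : Fin p → Fin q → ℕ → ℕ → Ω → ℕ}
  {ξ : (Fin q → ℕ) → (Fin p → ℕ)}

/-- The index `(i, k, t)` stands for the `k`-th individual of type `i` in generation `t - 1`,
whose offspring vector enters generation `t`. -/
def offspring (V : Fin p → Fin q → ℕ → ℕ → Ω → ℕ) (x : Fin p × ℕ × ℕ) : Ω → Fin q → ℕ :=
  fun ω j => V x.1 j x.2.1 x.2.2 ω

abbrev offspringSigma (V : Fin p → Fin q → ℕ → ℕ → Ω → ℕ) (S : Set (Fin p × ℕ × ℕ)) :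
    MeasurableSpace Ω :=
  ⨆ x ∈ S, MeasurableSpace.comap (offspring V x) inferInstance

def generationsUpTo (p m : ℕ) : Set (Fin p × ℕ × ℕ) := {x | x.2.2 ≤ m}

def generation (p t : ℕ) : Set (Fin p × ℕ × ℕ) := {x | x.2.2 = t}

def block (a b : Fin p → ℕ) (t : ℕ) : Set (Fin p × ℕ × ℕ) :=
  {x | x.2.2 = t ∧ a x.1 ≤ x.2.1 ∧ x.2.1 < a x.1 + b x.1}

lemma disjoint_generationsUpTo_generation (p m : ℕ) :
    Disjoint (generationsUpTo p m) (generation p (m + 1)) :=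
  Set.disjoint_left.2 fun x (hx : x.2.2 ≤ m) (hx' : x.2.2 = m + 1) => by omega

lemma generation_subset_generationsUpTo (p t : ℕ) : generation p t ⊆ generationsUpTo p t :=
  fun _ hx => le_of_eq hx

lemma block_subset_generation (a b : Fin p → ℕ) (t : ℕ) : block a b t ⊆ generation p t :=
  fun _ hx => hx.1

lemma disjoint_block_zero (a b : Fin p → ℕ) (t : ℕ) : Disjoint (block 0 a t) (block a b t) :=
  Set.disjoint_left.2 fun x hx hx' => by
    have := hx.2.2
    have := hx'.2.1
    simp only [Pi.zero_apply, zero_add] at *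
    omega

lemma offspringSigma_mono {S T : Set (Fin p × ℕ × ℕ)} (h : S ⊆ T) :
    offspringSigma V S ≤ offspringSigma V T :=
  biSup_mono h

lemma measurable_offspringSigma_V {S : Set (Fin p × ℕ × ℕ)} {i : Fin p} {k t : ℕ}
    (hx : (i, k, t) ∈ S) (j : Fin q) :
    Measurable[offspringSigma V S] (V i j k t) :=
  (measurable_pi_apply j).comp (measurable_iff_comap_le.2 (le_biSup
    (fun x => MeasurableSpace.comap (offspring V x) inferInstance) hx))

lemma measurable_nextGeneration {α β : Type*} [MeasurableSpace α] [Countable α]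
    [MeasurableSingletonClass α] [MeasurableSpace β] {m : ℕ} {X : Ω → α}
    (hX : Measurable[offspringSigma V (generationsUpTo p m)] X) {G : α → Ω → β}
    (hG : ∀ a, Measurable[offspringSigma V (generation p (m + 1))] (G a)) :
    Measurable[offspringSigma V (generationsUpTo p (m + 1))] fun ω => G (X ω) ω :=
  Measurable.eval_of_countable
    (fun a => (hG a).mono (offspringSigma_mono (generation_subset_generationsUpTo p _)) le_rfl)
    (hX.mono (offspringSigma_mono fun _ hx => Nat.le_succ_of_le hx) le_rfl)

def matingStep (ξ : (Fin q → ℕ) → (Fin p → ℕ)) (V : Fin p → Fin q → ℕ → ℕ → Ω → ℕ)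
    (a b : Fin p → ℕ) (t : ℕ) (ω : Ω) : Fin p → ℕ :=
  ξ fun j => ∑ i, ∑ k ∈ Finset.range (b i), V i j (a i + k) t ω

lemma measurable_matingStep (a b : Fin p → ℕ) (t : ℕ) :
    Measurable[offspringSigma V (block a b t)] (matingStep ξ V a b t) := by
  refine (measurable_of_countable ξ).comp (@measurable_pi_lambda _ _ _ (_) _ _ fun j => ?_)
  refine Finset.measurable_sum _ fun i _ => Finset.measurable_sum _ fun k hk => ?_
  have hk : (i, a i + k, t) ∈ block a b t :=
    ⟨rfl, Nat.le_add_right _ _, Nat.add_lt_add_left (Finset.mem_range.1 hk) _⟩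
  exact measurable_offspringSigma_V hk j

lemma measurable_matingStep_generation (a b : Fin p → ℕ) (t : ℕ) :
    Measurable[offspringSigma V (generation p t)] (matingStep ξ V a b t) :=
  (measurable_matingStep a b t).mono (offspringSigma_mono (block_subset_generation a b t)) le_rfl

lemma matingStep_eq_sum_sigma (a b : Fin p → ℕ) (t : ℕ) (ω : Ω) :
    matingStep ξ V a b t ω =
      ξ fun j => ∑ x : (i : Fin p) × Fin (b i), V x.1 j (a x.1 + x.2) t ω := by
  simp only [matingStep, Fintype.sum_sigma]
  congr 1
  funext j
  exact Finset.sum_congr rfl fun i _ =>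
    (Fin.sum_univ_eq_sum_range (fun k => V i j (a i + k) t ω) (b i)).symm

lemma matingStep_add_le (hξ : ∀ x y, ξ x + ξ y ≤ ξ (x + y)) (a b : Fin p → ℕ) (t : ℕ) (ω : Ω) :
    matingStep ξ V 0 a t ω + matingStep ξ V a b t ω ≤ matingStep ξ V 0 (a + b) t ω := by
  refine (hξ _ _).trans_eq (congrArg ξ (funext fun _ => ?_))
  simp only [Pi.add_apply, Pi.zero_apply, zero_add, Finset.sum_range_add, Finset.sum_add_distrib]

lemma matingStep_zero_mono (hξ : Monotone ξ) {b b' : Fin p → ℕ} (hb : b ≤ b') (t : ℕ) (ω : Ω) :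
    matingStep ξ V 0 b t ω ≤ matingStep ξ V 0 b' t ω :=
  hξ fun _ => Finset.sum_le_sum fun i _ =>
    Finset.sum_le_sum_of_subset (Finset.range_subset_range.2 (hb i))

def splitStep (ξ : (Fin q → ℕ) → (Fin p → ℕ)) (V : Fin p → Fin q → ℕ → ℕ → Ω → ℕ)
    (x : (Fin p → ℕ) × (Fin p → ℕ)) (t : ℕ) (ω : Ω) : (Fin p → ℕ) × (Fin p → ℕ) :=
  (matingStep ξ V 0 x.1 t ω, matingStep ξ V x.1 x.2 t ω)

def splitProcess (ξ : (Fin q → ℕ) → (Fin p → ℕ)) (V : Fin p → Fin q → ℕ → ℕ → Ω → ℕ)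
    (z z' : Fin p → ℕ) : ℕ → Ω → (Fin p → ℕ) × (Fin p → ℕ)
  | 0 => fun _ => (z, z')
  | m + 1 => fun ω => splitStep ξ V (splitProcess ξ V z z' m ω) (m + 1) ω

lemma measurable_splitStep (x : (Fin p → ℕ) × (Fin p → ℕ)) (t : ℕ) :
    Measurable[offspringSigma V (generation p t)] (splitStep ξ V x t) :=
  (measurable_matingStep_generation 0 x.1 t).prodMk (measurable_matingStep_generation x.1 x.2 t)

lemma measurable_splitProcess (z z' : Fin p → ℕ) (m : ℕ) :
    Measurable[offspringSigma V (generationsUpTo p m)] (splitProcess ξ V z z' m) := by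
  induction m with
  | zero => exact measurable_const
  | succ m ih => exact measurable_nextGeneration ih fun x => measurable_splitStep x (m + 1)

variable {Z : (Fin p → ℕ) → ℕ → Ω → Fin p → ℕ}

lemma Z_succ_eq_matingStep (hZ : ∀ z n ω, Z z (n + 1) ω =
      ξ (fun j => ∑ i, ∑ k ∈ Finset.range (Z z n ω i), V i j k (n + 1) ω))
    (z : Fin p → ℕ) (m : ℕ) (ω : Ω) :
    Z z (m + 1) ω = matingStep ξ V 0 (Z z m ω) (m + 1) ω := by
  simp only [hZ, matingStep, Pi.zero_apply, zero_add]

lemma splitProcess_fst_add_snd_le (hξ : ∀ x y, ξ x + ξ y ≤ ξ (x + y))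
    (hZ0 : ∀ z ω, Z z 0 ω = z)
    (hZ : ∀ z n ω, Z z (n + 1) ω =
      ξ (fun j => ∑ i, ∑ k ∈ Finset.range (Z z n ω i), V i j k (n + 1) ω))
    (z z' : Fin p → ℕ) (m : ℕ) (ω : Ω) :
    (splitProcess ξ V z z' m ω).1 + (splitProcess ξ V z z' m ω).2 ≤ Z (z + z') m ω := by
  induction m with
  | zero => exact (hZ0 _ ω).ge
  | succ m ih =>
    rw [Z_succ_eq_matingStep hZ]
    exact (matingStep_add_le hξ _ _ _ ω).trans
      (matingStep_zero_mono (monotone_of_superadditive hξ) ih _ ω)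

lemma measurable_Z (hZ0 : ∀ z ω, Z z 0 ω = z)
    (hZ : ∀ z n ω, Z z (n + 1) ω =
      ξ (fun j => ∑ i, ∑ k ∈ Finset.range (Z z n ω i), V i j k (n + 1) ω))
    (z : Fin p → ℕ) (m : ℕ) :
    Measurable[offspringSigma V (generationsUpTo p m)] (Z z m) := by
  induction m with
  | zero =>
    rw [show Z z 0 = fun _ => z from funext (hZ0 z)]
    exact measurable_const
  | succ m ih =>
    rw [show Z z (m + 1) = _ from funext (Z_succ_eq_matingStep hZ z m)]
    exact measurable_nextGeneration ih fun a => measurable_matingStep_generation 0 a (m + 1)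

end

variable {Ω : Type*} [MeasurableSpace Ω] {μ : Measure Ω} {p q : ℕ}
  {V : Fin p → Fin q → ℕ → ℕ → Ω → ℕ} {ξ : (Fin q → ℕ) → (Fin p → ℕ)}

lemma measurable_offspring (hV : ∀ i j k t, Measurable (V i j k t)) (x : Fin p × ℕ × ℕ) :
    Measurable (offspring V x) :=
  measurable_pi_lambda _ fun j => hV _ j _ _

lemma offspringSigma_le (hV : ∀ i j k t, Measurable (V i j k t)) (S : Set (Fin p × ℕ × ℕ)) :
    offspringSigma V S ≤ ‹MeasurableSpace Ω› :=
  iSup₂_le fun x _ => (measurable_offspring hV x).comap_le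

lemma indep_offspringSigma (hV : ∀ i j k t, Measurable (V i j k t))
    (hVindep : iIndepFun (offspring V) μ) {S T : Set (Fin p × ℕ × ℕ)} (hST : Disjoint S T) :
    Indep (offspringSigma V S) (offspringSigma V T) μ :=
  indep_iSup_of_disjoint (fun x => (measurable_offspring hV x).comap_le) hVindep hST

lemma identDistrib_matingStep (hV : ∀ i j k t, Measurable (V i j k t))
    (hVindep : iIndepFun (offspring V) μ)
    (hVident : ∀ i k t, IdentDistrib (offspring V (i, k, t)) (offspring V (i, 0, 0)) μ μ)
    (a b : Fin p → ℕ) (t : ℕ) :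
    IdentDistrib (matingStep ξ V a b t) (matingStep ξ V 0 b t) μ μ := by
  -- The offspring vectors used form an independent family whose law does not involve `a`.
  let ι := (i : Fin p) × Fin (b i)
  let e (c : Fin p → ℕ) (x : ι) : Fin p × ℕ × ℕ := (x.1, c x.1 + x.2, t)
  have he : ∀ c, Function.Injective (e c) := by
    rintro c ⟨i, k⟩ ⟨i', k'⟩ h
    obtain ⟨rfl, hk⟩ : i = i' ∧ c i + (k : ℕ) = c i' + k' :=
      ⟨congrArg Prod.fst h, congrArg (·.2.1) h⟩
    exact Sigma.ext rfl (heq_of_eq (Fin.ext (Nat.add_left_cancel hk)))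
  have hmap : ∀ c, μ.map (fun ω x => offspring V (e c x) ω) =
      Measure.pi fun x : ι => μ.map (offspring V (x.1, 0, 0)) := fun c => by
    rw [(hVindep.precomp (he c)).map_fun_eq_pi_map
      fun x => (measurable_offspring hV _).aemeasurable]
    exact congrArg Measure.pi (funext fun x => (hVident _ _ _).map_eq)
  have hsum : ∀ c, matingStep ξ V c b t =
      (fun w : ι → Fin q → ℕ => ξ fun j => ∑ x, w x j) ∘ fun ω x => offspring V (e c x) ω :=
    fun c => funext (matingStep_eq_sum_sigma c b t)
  rw [hsum a, hsum 0]
  refine IdentDistrib.comp ⟨?_, ?_, (hmap a).trans (hmap 0).symm⟩ (measurable_of_countable _)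
  all_goals exact (measurable_pi_lambda _ fun x => measurable_offspring hV _).aemeasurable

lemma measure_nextGeneration_preimage_singleton {α β : Type*} [MeasurableSpace α] [Countable α]
    [MeasurableSingletonClass α] [MeasurableSpace β] [MeasurableSingletonClass β]
    (hV : ∀ i j k t, Measurable (V i j k t)) (hVindep : iIndepFun (offspring V) μ) {m : ℕ}
    {X : Ω → α} (hX : Measurable[offspringSigma V (generationsUpTo p m)] X)
    {G : α → Ω → β} (hG : ∀ a, Measurable[offspringSigma V (generation p (m + 1))] (G a))
    {Y : Ω → β} (hY : ∀ ω, Y ω = G (X ω) ω) (c : β) :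
    μ (Y ⁻¹' {c}) = ∑' a, μ (X ⁻¹' {a}) * μ (G a ⁻¹' {c}) :=
  measure_preimage_eq_tsum_mul_of_indep (offspringSigma_le hV _) (offspringSigma_le hV _)
    (indep_offspringSigma hV hVindep (disjoint_generationsUpTo_generation p m)) hX hG hY c

lemma measure_splitStep_preimage_singleton (hV : ∀ i j k t, Measurable (V i j k t))
    (hVindep : iIndepFun (offspring V) μ)
    (hVident : ∀ i k t, IdentDistrib (offspring V (i, k, t)) (offspring V (i, 0, 0)) μ μ)
    (x : (Fin p → ℕ) × (Fin p → ℕ)) (t : ℕ) (c : (Fin p → ℕ) × (Fin p → ℕ)) :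
    μ (splitStep ξ V x t ⁻¹' {c}) =
      μ (matingStep ξ V 0 x.1 t ⁻¹' {c.1}) * μ (matingStep ξ V 0 x.2 t ⁻¹' {c.2}) := by
  have hpre : splitStep ξ V x t ⁻¹' {c} =
      matingStep ξ V 0 x.1 t ⁻¹' {c.1} ∩ matingStep ξ V x.1 x.2 t ⁻¹' {c.2} := by
    rw [← Set.mk_preimage_prod, Set.singleton_prod_singleton]
    rfl
  rw [hpre,
    (Indep_iff _ _ _).1 (indep_offspringSigma hV hVindep (disjoint_block_zero x.1 x.2 t)) _ _
      (measurable_matingStep 0 x.1 t (measurableSet_singleton _))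
      (measurable_matingStep x.1 x.2 t (measurableSet_singleton _)),
    (identDistrib_matingStep hV hVindep hVident x.1 x.2 t).measure_mem_eq
      (measurableSet_singleton _)]

variable {Z : (Fin p → ℕ) → ℕ → Ω → Fin p → ℕ}

lemma measure_splitProcess_preimage_singleton [IsProbabilityMeasure μ]
    (hV : ∀ i j k t, Measurable (V i j k t)) (hVindep : iIndepFun (offspring V) μ)
    (hVident : ∀ i k t, IdentDistrib (offspring V (i, k, t)) (offspring V (i, 0, 0)) μ μ)
    (hZ0 : ∀ z ω, Z z 0 ω = z)
    (hZ : ∀ z n ω, Z z (n + 1) ω =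
      ξ (fun j => ∑ i, ∑ k ∈ Finset.range (Z z n ω i), V i j k (n + 1) ω))
    (z z' : Fin p → ℕ) (m : ℕ) (a b : Fin p → ℕ) :
    μ (splitProcess ξ V z z' m ⁻¹' {(a, b)}) = μ (Z z m ⁻¹' {a}) * μ (Z z' m ⁻¹' {b}) := by
  induction m generalizing a b with
  | zero =>
    simp only [splitProcess, show Z z 0 = fun _ => z from funext (hZ0 z),
      show Z z' 0 = fun _ => z' from funext (hZ0 z'), Set.preimage_const, Set.mem_singleton_iff,
      Prod.ext_iff]
    split_ifs <;> simp_all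
  | succ m ih =>
    have hZstep (z : Fin p → ℕ) := measure_nextGeneration_preimage_singleton hV hVindep
      (measurable_Z hZ0 hZ z m) (fun a => measurable_matingStep_generation 0 a (m + 1))
      (Z_succ_eq_matingStep hZ z m)
    rw [measure_nextGeneration_preimage_singleton hV hVindep (measurable_splitProcess z z' m)
      (fun x => measurable_splitStep x (m + 1)) (Y := splitProcess ξ V z z' (m + 1))
      (fun _ => rfl), hZstep, hZstep, ENNReal.tsum_prod', ← ENNReal.tsum_mul_right]
    refine tsum_congr fun a' => ?_
    rw [← ENNReal.tsum_mul_left]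
    refine tsum_congr fun b' => ?_
    rw [ih, measure_splitStep_preimage_singleton hV hVindep hVident]
    ring

lemma measure_splitProcess_preimage_prod [IsProbabilityMeasure μ]
    (hV : ∀ i j k t, Measurable (V i j k t)) (hVindep : iIndepFun (offspring V) μ)
    (hVident : ∀ i k t, IdentDistrib (offspring V (i, k, t)) (offspring V (i, 0, 0)) μ μ)
    (hZ0 : ∀ z ω, Z z 0 ω = z)
    (hZ : ∀ z n ω, Z z (n + 1) ω =
      ξ (fun j => ∑ i, ∑ k ∈ Finset.range (Z z n ω i), V i j k (n + 1) ω))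
    (z z' : Fin p → ℕ) (m : ℕ) (s t : Set (Fin p → ℕ)) :
    μ (splitProcess ξ V z z' m ⁻¹' s ×ˢ t) = μ (Z z m ⁻¹' s) * μ (Z z' m ⁻¹' t) :=
  measure_preimage_prod_eq_mul_of_singleton
    ((measurable_splitProcess z z' m).mono (offspringSigma_le hV _) le_rfl)
    ((measurable_Z hZ0 hZ z m).mono (offspringSigma_le hV _) le_rfl)
    ((measurable_Z hZ0 hZ z' m).mono (offspringSigma_le hV _) le_rfl)
    (measure_splitProcess_preimage_singleton hV hVindep hVident hZ0 hZ z z' m) s t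

end BisexualGW

theorem bGW_superadditivity_general {Ω : Type*} [MeasurableSpace Ω]
    (μ : Measure Ω) [IsProbabilityMeasure μ] {p q : ℕ}
    (ξ : (Fin q → ℕ) → (Fin p → ℕ))
    (hξsuper : ∀ x y : Fin q → ℕ, ξ x + ξ y ≤ ξ (x + y))
    (V : Fin p → Fin q → ℕ → ℕ → Ω → ℕ)
    (hVmeas : ∀ i j k n, Measurable (V i j k n))
    (hVindep : iIndepFun
      (fun x : Fin p × ℕ × ℕ => fun ω => fun j => V x.1 j x.2.1 x.2.2 ω) μ)
    (hVident : ∀ i k n, IdentDistrib (fun ω => fun j => V i j k n ω)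
      (fun ω => fun j => V i j 0 0 ω) μ μ)
    -- the process started from an arbitrary initial condition z
    (Z : (Fin p → ℕ) → ℕ → Ω → Fin p → ℕ)
    (hZ0 : ∀ z ω, Z z 0 ω = z)
    (hZ : ∀ z n ω, Z z (n + 1) ω =
      ξ (fun j => ∑ i, ∑ k ∈ Finset.range (Z z n ω i), V i j k (n + 1) ω)) :
    ∀ z₀ z₀' z₁ z₁' : Fin p → ℕ, ∀ n : ℕ, 1 ≤ n →
      μ {ω | z₁ ≤ Z z₀ n ω} * μ {ω | z₁' ≤ Z z₀' n ω}
        ≤ μ {ω | z₁ + z₁' ≤ Z (z₀ + z₀') n ω} := by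
  intro z₀ z₀' z₁ z₁' n _
  calc μ {ω | z₁ ≤ Z z₀ n ω} * μ {ω | z₁' ≤ Z z₀' n ω}
      = μ (BisexualGW.splitProcess ξ V z₀ z₀' n ⁻¹' Set.Ici z₁ ×ˢ Set.Ici z₁') :=
        (BisexualGW.measure_splitProcess_preimage_prod hVmeas hVindep hVident hZ0 hZ z₀ z₀' n
          (Set.Ici z₁) (Set.Ici z₁')).symm
    _ ≤ μ {ω | z₁ + z₁' ≤ Z (z₀ + z₀') n ω} := measure_mono fun ω hω =>
        (add_le_add hω.1 hω.2).trans
          (BisexualGW.splitProcess_fst_add_snd_le hξsuper hZ0 hZ z₀ z₀' n ω)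

/-- Superadditivity of the multi-type bisexual Galton–Watson process: for all initial
conditions `z₀, z̃₀` and targets `z₁, z̃₁` in `ℕ^p` and all `n ≥ 1`,
`P(Zₙ ≥ z₁ + z̃₁ | Z₀ = z₀ + z̃₀) ≥ P(Zₙ ≥ z₁ | Z₀ = z₀) · P(Zₙ ≥ z̃₁ | Z₀ = z̃₀)`. -/
theorem bGW_superadditivity {Ω : Type*} [MeasurableSpace Ω]
    (μ : Measure Ω) [IsProbabilityMeasure μ] {p q : ℕ}
    (ξ : (Fin q → ℕ) → (Fin p → ℕ))
    (hξsuper : ∀ x y : Fin q → ℕ, ξ x + ξ y ≤ ξ (x + y))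
    (hξ0 : ξ 0 = 0)
    (V : Fin p → Fin q → ℕ → ℕ → Ω → ℕ)
    (hVmeas : ∀ i j k n, Measurable (V i j k n))
    (hVindep : iIndepFun
      (fun x : Fin p × ℕ × ℕ => fun ω => fun j => V x.1 j x.2.1 x.2.2 ω) μ)
    (hVident : ∀ i k n, IdentDistrib (fun ω => fun j => V i j k n ω)
      (fun ω => fun j => V i j 0 0 ω) μ μ)
    -- the process started from an arbitrary initial condition z
    (Z : (Fin p → ℕ) → ℕ → Ω → Fin p → ℕ)
    (hZ0 : ∀ z ω, Z z 0 ω = z)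
    (hZ : ∀ z n ω, Z z (n + 1) ω =
      ξ (fun j => ∑ i, ∑ k ∈ Finset.range (Z z n ω i), V i j k (n + 1) ω)) :
    ∀ z₀ z₀' z₁ z₁' : Fin p → ℕ, ∀ n : ℕ, 1 ≤ n →
      μ {ω | z₁ ≤ Z z₀ n ω} * μ {ω | z₁' ≤ Z z₀' n ω}
        ≤ μ {ω | z₁ + z₁' ≤ Z (z₀ + z₀') n ω} :=
  bGW_superadditivity_general μ ξ hξsuper V hVmeas hVindep hVident Z hZ0 hZ
end

section
/- Let f : [1,∞) → (0,∞) be a positive function with x ↦ f(x)/x non-increasing and ∫₁^∞ f(x)/x² dx < ∞. Then there exists a monotone increasing function F : ℝ₊ → ℝ₊ with F(x) ≥ f(x) for all x ≥ 1, x ↦ F(x)/x non-increasing, ∫₁^∞ F(x)/x² dx < ∞, and F concave on ℝ₊. -/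
open MeasureTheory Set
open scoped ENNReal

/-!
Extend `f x / x` to an antitone function `g ≥ 0` on `ℝ` by freezing it at its value at `1` on
`(-∞, 1]`, and take `F x = ∫₀ˣ g`. As `F` has the antitone derivative `g`, it is concave;
`F x ≥ x g x = f x` for `x ≥ 1`; and `F x / x`, the mean of `g` over `[0, x]`, is antitone.
Integrability follows from Tonelli:
`∫₁^∞ x⁻² ∫₀ˣ g(s) ds dx = ∫₀^∞ g(s) / max s 1 ds = ∫₀¹ g + ∫₁^∞ g(s) / s ds < ∞`.
-/

namespace Antitone

variable {g : ℝ → ℝ}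

theorem mul_le_intervalIntegral (hg : Antitone g) {a b : ℝ} (hab : a ≤ b) :
    (b - a) * g b ≤ ∫ s in a..b, g s := by
  simpa using intervalIntegral.integral_mono_on (μ := volume) hab intervalIntegrable_const
    hg.intervalIntegrable fun s hs => hg hs.2

theorem intervalIntegral_le_mul (hg : Antitone g) {a b : ℝ} (hab : a ≤ b) :
    ∫ s in a..b, g s ≤ (b - a) * g a := by
  simpa using intervalIntegral.integral_mono_on (μ := volume) hab hg.intervalIntegrable
    intervalIntegrable_const fun s hs => hg hs.1

theorem intervalIntegral_sub_intervalIntegral (hg : Antitone g) (a x y : ℝ) :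
    (∫ s in a..y, g s) - ∫ s in a..x, g s = ∫ s in x..y, g s :=
  intervalIntegral.integral_interval_sub_left hg.intervalIntegrable hg.intervalIntegrable

theorem monotone_intervalIntegral (hg : Antitone g) (hg0 : ∀ s, 0 ≤ g s) (a : ℝ) :
    Monotone fun x => ∫ s in a..x, g s := by
  intro x y hxy
  have := hg.mul_le_intervalIntegral hxy
  have := hg.intervalIntegral_sub_intervalIntegral a x y
  nlinarith [hg0 y]

theorem concaveOn_intervalIntegral (hg : Antitone g) (a : ℝ) :
    ConcaveOn ℝ univ fun x => ∫ s in a..x, g s := by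
  refine concaveOn_of_slope_anti_adjacent convex_univ fun {x y z} _ _ hxy hyz => ?_
  have hright : (∫ s in a..z, g s) - ∫ s in a..y, g s ≤ (z - y) * g y := by
    rw [hg.intervalIntegral_sub_intervalIntegral]
    exact hg.intervalIntegral_le_mul hyz.le
  have hleft : (y - x) * g y ≤ (∫ s in a..y, g s) - ∫ s in a..x, g s := by
    rw [hg.intervalIntegral_sub_intervalIntegral]
    exact hg.mul_le_intervalIntegral hxy.le
  calc _ ≤ g y := by rw [div_le_iff₀ (sub_pos.2 hyz)]; linarith
    _ ≤ _ := by rw [le_div_iff₀ (sub_pos.2 hxy)]; linarith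

theorem antitoneOn_intervalIntegral_div (hg : Antitone g) :
    AntitoneOn (fun x => (∫ s in (0 : ℝ)..x, g s) / x) (Ioi 0) := by
  intro x (hx : 0 < x) y (hy : 0 < y) hxy
  have hincr : (∫ s in (0 : ℝ)..y, g s) - ∫ s in (0 : ℝ)..x, g s ≤ (y - x) * g x := by
    rw [hg.intervalIntegral_sub_intervalIntegral]
    exact hg.intervalIntegral_le_mul hxy
  have hmean : (x - 0) * g x ≤ ∫ s in (0 : ℝ)..x, g s := hg.mul_le_intervalIntegral hx.le
  rw [div_le_div_iff₀ hy hx]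
  nlinarith [sub_nonneg.2 hxy]

end Antitone

theorem lintegral_Ioi_inv_sq {t : ℝ} (ht : 0 < t) :
    ∫⁻ x in Ioi t, ENNReal.ofReal (x ^ 2)⁻¹ = ENNReal.ofReal t⁻¹ := by
  have hrpow : EqOn (fun x : ℝ => (x ^ 2)⁻¹) (fun x => x ^ (-2 : ℝ)) (Ioi t) := fun x hx => by
    simp [Real.rpow_neg (ht.trans hx).le]
  have hint : IntegrableOn (fun x : ℝ => (x ^ 2)⁻¹) (Ioi t) :=
    (integrableOn_Ioi_rpow_of_lt (by norm_num) ht).congr_fun hrpow.symm measurableSet_Ioi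
  rw [← ofReal_integral_eq_lintegral_ofReal hint (.of_forall fun x => by positivity),
    setIntegral_congr_fun measurableSet_Ioi hrpow, integral_Ioi_rpow_of_lt (by norm_num) ht]
  norm_num [Real.rpow_neg_one]

theorem lintegral_Ioi_one_lintegral_Ioo_mul_inv_sq {G : ℝ → ℝ≥0∞} (hG : Measurable G) :
    ∫⁻ x in Ioi 1, (∫⁻ s in Ioo 0 x, G s) * ENNReal.ofReal (x ^ 2)⁻¹ =
      ∫⁻ s in Ioi 0, G s * ENNReal.ofReal (max s 1)⁻¹ := by
  have hker : Measurable fun x : ℝ => ENNReal.ofReal (x ^ 2)⁻¹ := by fun_prop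
  have hmeas : Measurable (Function.uncurry fun x s : ℝ =>
      (Iio x).indicator G s * ENNReal.ofReal (x ^ 2)⁻¹) :=
    ((hG.comp measurable_snd).indicator (measurableSet_lt measurable_snd measurable_fst)).mul
      (hker.comp measurable_fst)
  calc _ = ∫⁻ x in Ioi 1, ∫⁻ s in Ioi 0, (Iio x).indicator G s * ENNReal.ofReal (x ^ 2)⁻¹ := by
        refine lintegral_congr fun x => ?_
        rw [lintegral_mul_const _ (hG.indicator measurableSet_Iio),
          lintegral_indicator measurableSet_Iio, Measure.restrict_restrict measurableSet_Iio,
          Iio_inter_Ioi]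
    _ = ∫⁻ s in Ioi 0, ∫⁻ x in Ioi 1, (Iio x).indicator G s * ENNReal.ofReal (x ^ 2)⁻¹ :=
        lintegral_lintegral_swap hmeas.aemeasurable
    _ = _ := by
        refine lintegral_congr fun s => ?_
        have hind : ∀ x, (Iio x).indicator G s * ENNReal.ofReal (x ^ 2)⁻¹ =
            G s * (Ioi s).indicator (fun x => ENNReal.ofReal (x ^ 2)⁻¹) x := fun x => by
          by_cases hsx : s < x <;> simp [indicator, hsx]
        simp_rw [hind]
        rw [lintegral_const_mul _ (hker.indicator measurableSet_Ioi),
          lintegral_indicator measurableSet_Ioi, Measure.restrict_restrict measurableSet_Ioi,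
          Ioi_inter_Ioi, lintegral_Ioi_inv_sq (zero_lt_one.trans_le (le_max_right s 1))]

theorem Antitone.integrableOn_intervalIntegral_div_sq {g : ℝ → ℝ} (hg : Antitone g)
    (hg0 : ∀ s, 0 ≤ g s) (hint : IntegrableOn (fun s => g s / s) (Ioi 1)) :
    IntegrableOn (fun x => (∫ s in (0 : ℝ)..x, g s) / x ^ 2) (Ici 1) := by
  have hIoc (x : ℝ) (hx : 0 ≤ x) : IntegrableOn g (Ioc 0 x) :=
    (intervalIntegrable_iff_integrableOn_Ioc_of_le hx).1 hg.intervalIntegrable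
  have hdiv : IntegrableOn (fun s => g s / max s 1) (Ioi 0) := by
    rw [← Ioc_union_Ioi_eq_Ioi zero_le_one]
    refine (hIoc 1 zero_le_one).congr_fun (fun s hs => ?_) measurableSet_Ioc |>.union
      (hint.congr_fun (fun s hs => ?_) measurableSet_Ioi)
    · simp [max_eq_right hs.2]
    · simp [max_eq_left (le_of_lt (mem_Ioi.1 hs))]
  have hpoint : ∀ x ∈ Ioi (1 : ℝ), ENNReal.ofReal ((∫ s in (0 : ℝ)..x, g s) / x ^ 2) =
      (∫⁻ s in Ioo 0 x, ENNReal.ofReal (g s)) * ENNReal.ofReal (x ^ 2)⁻¹ := fun x hx => by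
    have hx0 : 0 ≤ x := zero_le_one.trans (le_of_lt hx)
    rw [intervalIntegral.integral_of_le hx0, integral_Ioc_eq_integral_Ioo, div_eq_mul_inv,
      ENNReal.ofReal_mul (setIntegral_nonneg measurableSet_Ioo fun s _ => hg0 s),
      ofReal_integral_eq_lintegral_ofReal ((hIoc x hx0).mono_set Ioo_subset_Ioc_self)
        (.of_forall hg0)]
  rw [integrableOn_Ici_iff_integrableOn_Ioi]
  refine ⟨((hg.monotone_intervalIntegral hg0 0).measurable.div
    (measurable_id.pow_const 2)).aestronglyMeasurable, ?_⟩
  rw [hasFiniteIntegral_iff_ofReal ((ae_restrict_iff' measurableSet_Ioi).2 (.of_forall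
    fun x hx => div_nonneg (intervalIntegral.integral_nonneg (zero_le_one.trans (le_of_lt hx))
      fun s _ => hg0 s) (sq_nonneg x)))]
  calc _ = ∫⁻ x in Ioi 1, (∫⁻ s in Ioo 0 x, ENNReal.ofReal (g s)) * ENNReal.ofReal (x ^ 2)⁻¹ :=
        setLIntegral_congr_fun measurableSet_Ioi hpoint
    _ = ∫⁻ s in Ioi 0, ENNReal.ofReal (g s) * ENNReal.ofReal (max s 1)⁻¹ :=
        lintegral_Ioi_one_lintegral_Ioo_mul_inv_sq (ENNReal.measurable_ofReal.comp hg.measurable)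
    _ = ∫⁻ s in Ioi 0, ENNReal.ofReal (g s / max s 1) := by
        simp_rw [div_eq_mul_inv, ENNReal.ofReal_mul (hg0 _)]
    _ < ⊤ := hdiv.lintegral_lt_top

/-- Klebaner's regularization lemma: if `f : [1,∞) → (0,∞)` has `x ↦ f(x)/x`
non-increasing and `∫₁^∞ f(x)/x² dx < ∞`, then there is a monotone increasing
`F : ℝ₊ → ℝ₊` with `F ≥ f` on `[1,∞)`, `x ↦ F(x)/x` non-increasing,
`∫₁^∞ F(x)/x² dx < ∞`, and `F` concave on `ℝ₊`. -/
theorem concave_majorant_exists (f : ℝ → ℝ)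
    (hfpos : ∀ x : ℝ, 1 ≤ x → 0 < f x)
    (hfratio : AntitoneOn (fun x => f x / x) (Set.Ici (1 : ℝ)))
    (hfint : IntegrableOn (fun x => f x / x ^ 2) (Set.Ici (1 : ℝ))) :
    ∃ F : ℝ → ℝ,
      (∀ x : ℝ, 0 ≤ x → 0 ≤ F x) ∧
      MonotoneOn F (Set.Ici (0 : ℝ)) ∧
      (∀ x : ℝ, 1 ≤ x → f x ≤ F x) ∧
      AntitoneOn (fun x => F x / x) (Set.Ioi (0 : ℝ)) ∧
      IntegrableOn (fun x => F x / x ^ 2) (Set.Ici (1 : ℝ)) ∧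
      ConcaveOn ℝ (Set.Ici (0 : ℝ)) F := by
  set g : ℝ → ℝ := fun s => f (max s 1) / max s 1
  have hg : Antitone g := fun s t hst =>
    hfratio (le_max_right s 1) (le_max_right t 1) (max_le_max hst le_rfl)
  have hg0 (s : ℝ) : 0 ≤ g s :=
    (div_pos (hfpos _ (le_max_right s 1)) (one_pos.trans_le (le_max_right s 1))).le
  have hg_eq {s : ℝ} (hs : 1 ≤ s) : g s = f s / s := by simp only [g, max_eq_left hs]
  refine ⟨fun x => ∫ s in (0 : ℝ)..x, g s,
    fun x hx => intervalIntegral.integral_nonneg hx fun s _ => hg0 s,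
    (hg.monotone_intervalIntegral hg0 0).monotoneOn _, fun x hx => ?_,
    hg.antitoneOn_intervalIntegral_div, hg.integrableOn_intervalIntegral_div_sq hg0 ?_,
    (hg.concaveOn_intervalIntegral 0).subset (subset_univ _) (convex_Ici 0)⟩
  · calc f x = (x - 0) * g x := by
          rw [hg_eq hx, sub_zero, mul_div_cancel₀ _ (one_pos.trans_le hx).ne']
      _ ≤ _ := hg.mul_le_intervalIntegral (zero_le_one.trans hx)
  · refine (hfint.mono_set Ioi_subset_Ici_self).congr_fun (fun s hs => ?_) measurableSet_Ioi
    rw [hg_eq (le_of_lt hs), div_div, ← sq]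
end

section
/- Let f : ℝ₊ → ℝ₊ be non-increasing with x ↦ x·f(x) non-decreasing and Σ_{n≥1} f(n)/n < ∞. Let (aₙ) be a sequence of positive numbers satisfying |a_{n+1} − aₙ| ≤ aₙ·f(aₙ·mⁿ) for all n ≥ 0, for some m > 1. Then lim_{n→∞} aₙ exists; moreover there exists b₀ depending only on f and m such that a₀ > b₀ implies lim aₙ > 0. -/
/-!
Cauchy condensation turns `∑ f(n)/n < ∞` into `∑ f(mⁿ) < ∞`. Since `f` is antitone and
`x f(x)` monotone, `aₙ f(aₙ mⁿ) ≤ max(aₙ, 1) f(mⁿ)`; hence `max(aₙ, 1)` grows at most by the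
convergent product `∏ (1 + f(mᵏ))`, the increments of `(aₙ)` are dominated by a summable series,
and `(aₙ)` is Cauchy. For the positive limit take `N` with `∑_{k ≥ N} f(mᵏ) ≤ 1/2` and
`b₀ = 2 m^N`: while `aₙ ≥ m^N`, a step loses at most the fraction `f(m^{n+N})` of `aₙ`, which by
induction keeps `aₙ ≥ a₀/2 > m^N` forever.
-/

open Filter Finset Topology

theorem summable_comp_two_pow_of_summable_div {f : ℝ → ℝ} (hfnn : ∀ x, 0 ≤ x → 0 ≤ f x)
    (hfanti : AntitoneOn f (Set.Ici 0)) (hf : Summable fun n : ℕ => f (n + 1) / (n + 1)) :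
    Summable fun k : ℕ => f (2 ^ k) := by
  set g : ℕ → ℝ := fun n => f n / n
  have hg : Summable g := (summable_nat_add_iff 1).1 (by simpa [g] using hf)
  have hgnn : ∀ n, 0 ≤ g n := fun n => div_nonneg (hfnn _ n.cast_nonneg) n.cast_nonneg
  have hganti : ∀ ⦃p q : ℕ⦄, 0 < p → p ≤ q → g q ≤ g p := fun p q hp hpq =>
    div_le_div₀ (hfnn _ p.cast_nonneg) (hfanti (Set.mem_Ici.2 p.cast_nonneg)
      (Set.mem_Ici.2 q.cast_nonneg) (by exact_mod_cast hpq)) (by exact_mod_cast hp)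
      (by exact_mod_cast hpq)
  refine ((summable_condensed_iff_of_nonneg hgnn hganti).2 hg).congr fun k => ?_
  simp only [g, Nat.cast_pow, Nat.cast_ofNat]
  field_simp

theorem Summable.comp_div_nat {g : ℕ → ℝ} (hgnn : ∀ n, 0 ≤ g n) (hg : Summable g) (p : ℕ)
    [NeZero p] : Summable fun n => g (n / p) := by
  rw [← (Nat.divModEquiv p).symm.summable_iff]
  refine (summable_prod_of_nonneg fun _ => hgnn _).2 ⟨fun _ => Summable.of_finite, ?_⟩
  have hdiv (q : ℕ) (r : Fin p) : (q * p + r) / p = q := by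
    rw [Nat.add_comm, Nat.add_mul_div_right _ _ (NeZero.pos p), Nat.div_eq_of_lt r.2, zero_add]
  simpa [hdiv] using hg.mul_left (p : ℝ)

theorem summable_comp_pow_of_summable_comp_two_pow {f : ℝ → ℝ} (hfnn : ∀ x, 0 ≤ x → 0 ≤ f x)
    (hfanti : AntitoneOn f (Set.Ici 0)) (hf : Summable fun k : ℕ => f (2 ^ k)) {m : ℝ}
    (hm : 1 < m) : Summable fun n : ℕ => f (m ^ n) := by
  obtain ⟨p, hp⟩ := pow_unbounded_of_one_lt (2 : ℝ) hm
  have : NeZero p := ⟨by rintro rfl; norm_num at hp⟩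
  refine (hf.comp_div_nat (fun k => hfnn _ (by positivity)) p).of_nonneg_of_le
    (fun n => hfnn _ (by positivity)) fun n => hfanti (by simp [pow_nonneg])
      (by simp [pow_nonneg (zero_le_one.trans hm.le)]) ?_
  calc (2 : ℝ) ^ (n / p) ≤ (m ^ p) ^ (n / p) := pow_le_pow_left₀ zero_le_two hp.le _
    _ = m ^ (p * (n / p)) := (pow_mul _ _ _).symm
    _ ≤ m ^ n := pow_le_pow_right₀ hm.le (Nat.mul_div_le n p)

theorem mul_apply_mul_le_max_one_mul {f : ℝ → ℝ} (hfanti : AntitoneOn f (Set.Ici 0))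
    (hfmono : MonotoneOn (fun x => x * f x) (Set.Ici 0)) {a x : ℝ} (ha : 0 ≤ a) (hx : 0 < x) :
    a * f (a * x) ≤ max a 1 * f x := by
  rcases le_total a 1 with ha1 | ha1
  · have h := hfmono (Set.mem_Ici.2 (mul_nonneg ha hx.le)) (Set.mem_Ici.2 hx.le)
      (mul_le_of_le_one_left hx.le ha1)
    rw [max_eq_right ha1, one_mul]
    exact le_of_mul_le_mul_right (by linarith) hx
  · rw [max_eq_left ha1]
    exact mul_le_mul_of_nonneg_left (hfanti (Set.mem_Ici.2 hx.le)
      (Set.mem_Ici.2 (mul_nonneg ha hx.le)) (le_mul_of_one_le_left hx.le ha1)) ha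

theorem le_mul_exp_sum_of_le_mul_one_add {b ε : ℕ → ℝ} (hb0 : 0 ≤ b 0) (hε0 : ∀ n, 0 ≤ ε n)
    (hb : ∀ n, b (n + 1) ≤ b n * (1 + ε n)) (n : ℕ) :
    b n ≤ b 0 * Real.exp (∑ k ∈ range n, ε k) := by
  induction n with
  | zero => simp
  | succ n ih =>
    calc b (n + 1) ≤ b n * (1 + ε n) := hb n
      _ ≤ b 0 * Real.exp (∑ k ∈ range n, ε k) * Real.exp (ε n) :=
        mul_le_mul ih (by linarith [Real.add_one_le_exp (ε n)]) (by linarith [hε0 n])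
          (by positivity)
      _ = b 0 * Real.exp (∑ k ∈ range (n + 1), ε k) := by
        rw [sum_range_succ, Real.exp_add, mul_assoc]

theorem exists_tendsto_of_abs_sub_le_max_one_mul {a ε : ℕ → ℝ} (hε0 : ∀ n, 0 ≤ ε n)
    (hε : Summable ε) (ha : ∀ n, |a (n + 1) - a n| ≤ max (a n) 1 * ε n) :
    ∃ L, Tendsto a atTop (𝓝 L) := by
  set b : ℕ → ℝ := fun n => max (a n) 1
  have hb : ∀ n, b (n + 1) ≤ b n * (1 + ε n) := fun n => by
    have h1 : 1 ≤ b n := le_max_right _ _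
    have h2 : a n ≤ b n := le_max_left _ _
    have h3 := (abs_le.1 (ha n)).2
    exact max_le (by nlinarith [hε0 n]) (by nlinarith [hε0 n])
  set M := b 0 * Real.exp (∑' k, ε k)
  have hbM (n : ℕ) : b n ≤ M :=
    (le_mul_exp_sum_of_le_mul_one_add (by positivity) hε0 hb n).trans <|
      mul_le_mul_of_nonneg_left (Real.exp_le_exp.2 (hε.sum_le_tsum _ fun k _ => hε0 k))
        (by positivity)
  refine cauchySeq_tendsto_of_complete (cauchySeq_of_dist_le_of_summable (fun n => M * ε n)
    (fun n => ?_) (hε.mul_left M))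
  rw [dist_comm, Real.dist_eq]
  exact (ha n).trans (mul_le_mul_of_nonneg_right (hbM n) (hε0 n))

theorem mul_one_sub_le_of_step_lower_bound {a δ : ℕ → ℝ} {c θ : ℝ} (hδ0 : ∀ n, 0 ≤ δ n)
    (hδ : ∀ n, ∑ k ∈ range n, δ k ≤ θ) (hθ : θ ≤ 1) (ha0 : 0 ≤ a 0) (hc : c ≤ a 0 * (1 - θ))
    (ha : ∀ n, c ≤ a n → a n * (1 - δ n) ≤ a (n + 1)) (n : ℕ) :
    a 0 * (1 - θ) ≤ a n := by
  suffices h : ∀ n, a 0 * (1 - ∑ k ∈ range n, δ k) ≤ a n from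
    (mul_le_mul_of_nonneg_left (by linarith [hδ n]) ha0).trans (h n)
  intro n
  induction n with
  | zero => simp
  | succ n ih =>
    have hcn : c ≤ a n :=
      hc.trans <| (mul_le_mul_of_nonneg_left (by linarith [hδ n]) ha0).trans ih
    have hsum0 : 0 ≤ ∑ k ∈ range n, δ k := sum_nonneg fun k _ => hδ0 k
    have hδn : δ n ≤ 1 := by
      have := hδ (n + 1)
      rw [sum_range_succ] at this
      linarith
    calc a 0 * (1 - ∑ k ∈ range (n + 1), δ k)
        ≤ a 0 * (1 - ∑ k ∈ range n, δ k) * (1 - δ n) := by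
          rw [sum_range_succ]
          nlinarith [mul_nonneg ha0 (mul_nonneg hsum0 (hδ0 n))]
      _ ≤ a n * (1 - δ n) := mul_le_mul_of_nonneg_right ih (by linarith)
      _ ≤ a (n + 1) := ha n hcn

/-- Klebaner's geometric-rate lemma: let `f : ℝ₊ → ℝ₊` be non-increasing with
`x ↦ x·f(x)` non-decreasing and `Σ_{n≥1} f(n)/n < ∞`, and let `m > 1`. Then every
positive sequence `(aₙ)` with `|a_{n+1} − aₙ| ≤ aₙ·f(aₙ·mⁿ)` converges, and there is
`b₀` (depending only on `f` and `m`) such that `a₀ > b₀` forces a positive limit. -/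
theorem klebaner_geometric_lemma (f : ℝ → ℝ)
    (hfnn : ∀ x : ℝ, 0 ≤ x → 0 ≤ f x)
    (hfanti : AntitoneOn f (Set.Ici (0 : ℝ)))
    (hfmono : MonotoneOn (fun x => x * f x) (Set.Ici (0 : ℝ)))
    (hfsum : Summable (fun n : ℕ => f (n + 1) / (n + 1)))
    (m : ℝ) (hm : 1 < m) :
    (∀ a : ℕ → ℝ, (∀ n, 0 < a n) →
      (∀ n : ℕ, |a (n + 1) - a n| ≤ a n * f (a n * m ^ n)) →
      ∃ L : ℝ, Tendsto a atTop (nhds L)) ∧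
    ∃ b₀ : ℝ, ∀ a : ℕ → ℝ, (∀ n, 0 < a n) →
      (∀ n : ℕ, |a (n + 1) - a n| ≤ a n * f (a n * m ^ n)) →
      b₀ < a 0 →
      ∃ L : ℝ, 0 < L ∧ Tendsto a atTop (nhds L) := by
  have hε0 (n : ℕ) : 0 ≤ f (m ^ n) := hfnn _ (by positivity)
  have hε : Summable fun n : ℕ => f (m ^ n) := summable_comp_pow_of_summable_comp_two_pow hfnn
    hfanti (summable_comp_two_pow_of_summable_div hfnn hfanti hfsum) hm
  have hconv (a : ℕ → ℝ) (ha : ∀ n, 0 < a n)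
      (hstep : ∀ n : ℕ, |a (n + 1) - a n| ≤ a n * f (a n * m ^ n)) :
      ∃ L, Tendsto a atTop (𝓝 L) :=
    exists_tendsto_of_abs_sub_le_max_one_mul hε0 hε fun n => (hstep n).trans <|
      mul_apply_mul_le_max_one_mul hfanti hfmono (ha n).le (by positivity)
  refine ⟨hconv, ?_⟩
  obtain ⟨N, hN⟩ := ((tendsto_sum_nat_add fun n => f (m ^ n)).eventually
    (ge_mem_nhds (by norm_num : (0 : ℝ) < 1 / 2))).exists
  have hδ (n : ℕ) : ∑ k ∈ range n, f (m ^ (k + N)) ≤ 1 / 2 :=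
    (((summable_nat_add_iff N).2 hε).sum_le_tsum _ fun k _ => hε0 _).trans hN
  refine ⟨2 * m ^ N, fun a ha hstep ha0 => ?_⟩
  obtain ⟨L, hL⟩ := hconv a ha hstep
  have hloss (n : ℕ) (hn : m ^ N ≤ a n) : a n * (1 - f (m ^ (n + N))) ≤ a (n + 1) := by
    have hf : f (a n * m ^ n) ≤ f (m ^ (n + N)) :=
      hfanti (Set.mem_Ici.2 (by positivity)) (Set.mem_Ici.2 (mul_nonneg (ha n).le (by positivity)))
        (by rw [pow_add, mul_comm (m ^ n)]; gcongr)
    nlinarith [(abs_le.1 (hstep n)).1, ha n]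
  have hlow := mul_one_sub_le_of_step_lower_bound (fun _ => hε0 _) hδ (by norm_num) (ha 0).le
    (by linarith) hloss
  exact ⟨L, (by linarith [ha 0] : 0 < a 0 * (1 - 1 / 2)).trans_le (ge_of_tendsto' hL hlow), hL⟩
end
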